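/- arXiv:2307.16772 — 6 statements merged into one kernel-verified Lean document; each statement's English description precedes it below -/
import Mathlib

section
/- Let (X_i, T_i), i = 1, …, r, be dynamical systems, π_i : (X_i,T_i) → (X_{i+1},T_{i+1}) factor maps, a ∈ [0,1]^{r−1}, f : X_1 → ℝ continuous, and ε > 0. Then the sequence N ↦ log P^a_r(X_r, f, N, ε) is subadditive: for all natural numbers N and M, log P^a_r(X_r, f, N+M, ε) ≤ log P^a_r(X_r, f, N, ε) + log P^a_r(X_r, f, M, ε). Consequently the limit lim_{N→∞} (1/N) log P^a_r(X_r, f, N, ε) exists. -/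
open Set MeasureTheory Filter Topology
open scoped ENNReal NNReal

noncomputable section

namespace WTPaper

/-- The Bowen dynamical `edist` up to time `N`:
`d_N(x,y) = max_{0 ≤ n < N} d(T^n x, T^n y)`. -/
def dynEDist {X : Type*} [PseudoEMetricSpace X] (T : X → X) (N : ℕ) (x y : X) : ℝ≥0∞ :=
  (Finset.range N).sup fun n => edist (T^[n] x) (T^[n] y)

/-- The diameter of a set with respect to the Bowen metric `d_N`. -/
def dynDiam {X : Type*} [PseudoEMetricSpace X] (T : X → X) (N : ℕ) (U : Set X) : ℝ≥0∞ :=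
  ⨆ x ∈ U, ⨆ y ∈ U, dynEDist T N x y

/-- Birkhoff sum `S_N f = f + f ∘ T + ⋯ + f ∘ T^{N-1}`. -/
def birkhoff {X : Type*} (T : X → X) (f : X → ℝ) (N : ℕ) (x : X) : ℝ :=
  ∑ n ∈ Finset.range N, f (T^[n] x)

section Sequence

variable {X : ℕ → Type*}

/-- The quantity `P^a_{i+1}(Ω, f, N, ε)` of the paper (level index `i` is 0-based, so
`paP T π a f 0` is `P^a_1`, defined on subsets of `X 0`, and level `i+1` is defined from
level `i` through the factor map `π i : X i → X (i+1)` and the exponent `a i`). -/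
def paP [∀ i, MetricSpace (X i)] (T : ∀ i, X i → X i) (π : ∀ i, X i → X (i + 1))
    (a : ℕ → ℝ) (f : X 0 → ℝ) : ∀ i : ℕ, Set (X i) → ℕ → ℝ → ℝ
  | 0 => fun Ω N ε =>
      sInf { s : ℝ | ∃ (n : ℕ) (U : Fin n → Set (X 0)),
        (∀ j, IsOpen (U j)) ∧ (Ω ⊆ ⋃ j, U j) ∧
        (∀ j, dynDiam (T 0) N (U j) < ENNReal.ofReal ε) ∧
        s = ∑ j, Real.exp (sSup (birkhoff (T 0) f N '' U j)) }
  | (i + 1) => fun Ω N ε =>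
      sInf { s : ℝ | ∃ (n : ℕ) (U : Fin n → Set (X (i + 1))),
        (∀ j, IsOpen (U j)) ∧ (Ω ⊆ ⋃ j, U j) ∧
        (∀ j, dynDiam (T (i + 1)) N (U j) < ENNReal.ofReal ε) ∧
        s = ∑ j, (paP T π a f i (π i ⁻¹' U j) N ε) ^ (a i) }

/-- The counting quantity `#^a_{i+1}(Ω, N, ε)` (level index 0-based as in `paP`). -/
def cntP [∀ i, MetricSpace (X i)] (T : ∀ i, X i → X i) (π : ∀ i, X i → X (i + 1))
    (a : ℕ → ℝ) : ∀ i : ℕ, Set (X i) → ℕ → ℝ → ℝ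
  | 0 => fun Ω N ε =>
      sInf { s : ℝ | ∃ (n : ℕ) (U : Fin n → Set (X 0)),
        (∀ j, IsOpen (U j)) ∧ (Ω ⊆ ⋃ j, U j) ∧
        (∀ j, dynDiam (T 0) N (U j) < ENNReal.ofReal ε) ∧
        s = (n : ℝ) }
  | (i + 1) => fun Ω N ε =>
      sInf { s : ℝ | ∃ (n : ℕ) (U : Fin n → Set (X (i + 1))),
        (∀ j, IsOpen (U j)) ∧ (Ω ⊆ ⋃ j, U j) ∧
        (∀ j, dynDiam (T (i + 1)) N (U j) < ENNReal.ofReal ε) ∧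
        s = ∑ j, (cntP T π a i (π i ⁻¹' U j) N ε) ^ (a i) }

/-- The topological pressure of `a`-exponent of a sequence of `r` dynamical systems:
`P^a(f) = lim_{ε → 0} lim_{N → ∞} (1/N) log P^a_r(X_r, f, N, ε)`.
(The limit over `N` of the subadditive sequence is its infimum over `N ≥ 1`, and the
limit as `ε → 0` of the quantity, nondecreasing as `ε` decreases, is its supremum
over `ε > 0`.) -/
def paPressure [∀ i, MetricSpace (X i)] (r : ℕ) (T : ∀ i, X i → X i)
    (π : ∀ i, X i → X (i + 1)) (a : ℕ → ℝ) (f : X 0 → ℝ) : EReal :=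
  ⨆ ε : {e : ℝ // 0 < e}, ⨅ N : {n : ℕ // 0 < n},
    ((((N : ℕ) : ℝ)⁻¹ * Real.log (paP T π a f (r - 1) Set.univ (N : ℕ) (ε : ℝ)) : ℝ) : EReal)

/-- The topological entropy of `a`-exponent of a sequence of `r` dynamical systems:
`h^a(T) = lim_{ε → 0} lim_{N → ∞} (1/N) log #^a_r(X_r, N, ε)`. -/
def cntEntropy [∀ i, MetricSpace (X i)] (r : ℕ) (T : ∀ i, X i → X i)
    (π : ∀ i, X i → X (i + 1)) (a : ℕ → ℝ) : EReal :=
  ⨆ ε : {e : ℝ // 0 < e}, ⨅ N : {n : ℕ // 0 < n},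
    ((((N : ℕ) : ℝ)⁻¹ * Real.log (cntP T π a (r - 1) Set.univ (N : ℕ) (ε : ℝ)) : ℝ) : EReal)

/-- The weight `w_a` associated to the exponents `a` (0-based: `weight a r 0` is the paper's
`w_1 = a_1 ⋯ a_{r-1}`, and `weight a r i` for `1 ≤ i ≤ r-1` is the paper's
`w_{i+1} = (1 - a_i) a_{i+1} ⋯ a_{r-1}`). -/
def weight (a : ℕ → ℝ) (r i : ℕ) : ℝ :=
  (if i = 0 then 1 else 1 - a (i - 1)) * ∏ j ∈ Finset.Ico i (r - 1), a j

/-- `π^(i) = π_{i-1} ∘ ⋯ ∘ π_0 : X 0 → X i` (with `π^(0) = id`). -/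
def picomp (π : ∀ i, X i → X (i + 1)) : ∀ i : ℕ, X 0 → X i
  | 0 => id
  | (i + 1) => π i ∘ picomp π i

end Sequence

section Entropy

variable {Z : Type*}

/-- A finite (Borel) partition. -/
def IsFinPartition [MeasurableSpace Z] (P : Finset (Set Z)) : Prop :=
  (∀ A ∈ P, MeasurableSet A) ∧ (∀ A ∈ P, ∀ B ∈ P, A ≠ B → A ∩ B = ∅) ∧
    ⋃₀ (P : Set (Set Z)) = Set.univ

/-- The refinement `P_N = P ∨ T⁻¹P ∨ ⋯ ∨ T^{-(N-1)}P` of a finite partition. -/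
def refinePart (T : Z → Z) (P : Finset (Set Z)) (N : ℕ) : Finset (Set Z) :=
  letI := Classical.decEq (Set Z)
  Finset.image (fun c : Fin N → ↥P => ⋂ k : Fin N, T^[(k : ℕ)] ⁻¹' ((c k : Set Z)))
    Finset.univ

/-- Shannon entropy `H_μ(P) = -∑_{A ∈ P} μ(A) log μ(A)` of a finite partition. -/
def partEntropy [MeasurableSpace Z] (μ : Measure Z) (P : Finset (Set Z)) : ℝ :=
  ∑ A ∈ P, -((μ A).toReal * Real.log (μ A).toReal)

/-- `h_μ(T, P) = lim_{N → ∞} H_μ(P_N)/N`; for an invariant measure the limit exists by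
subadditivity and equals the infimum over `N ≥ 1`. -/
def entOfPart [MeasurableSpace Z] (μ : Measure Z) (T : Z → Z) (P : Finset (Set Z)) : ℝ :=
  ⨅ N : {n : ℕ // 0 < n}, partEntropy μ (refinePart T P (N : ℕ)) / ((N : ℕ) : ℝ)

/-- The Kolmogorov–Sinai (measure-theoretic) entropy
`h_μ(T) = sup { h_μ(T, P) : P a finite Borel partition }`. -/
def kolSinai [MeasurableSpace Z] (μ : Measure Z) (T : Z → Z) : EReal :=
  ⨆ P : {P : Finset (Set Z) // IsFinPartition P}, ((entOfPart μ T (P : Finset (Set Z)) : ℝ) : EReal)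

end Entropy

section Var

variable {X : ℕ → Type*}

/-- The variational expression
`P^a_var(f) = sup_μ ( ∑_i w_i h_{π^(i-1)_* μ}(T_i) + w_1 ∫ f dμ )`,
the supremum being over all `T 0`-invariant Borel probability measures on `X 0`. -/
def paVar [∀ i, MeasurableSpace (X i)] (r : ℕ) (T : ∀ i, X i → X i)
    (π : ∀ i, X i → X (i + 1)) (a : ℕ → ℝ) (f : X 0 → ℝ) : EReal :=
  ⨆ μ : {μ : Measure (X 0) // IsProbabilityMeasure μ ∧ μ.map (T 0) = μ},
    (∑ i ∈ Finset.range r,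
        ((weight a r i : ℝ) : EReal) *
          kolSinai (Measure.map (picomp π i) (μ : Measure (X 0))) (T i))
      + ((weight a r 0 * ∫ x, f x ∂(μ : Measure (X 0)) : ℝ) : EReal)

/-- The variational expression `sup_μ ∑_i w_i h_{π^(i-1)_* μ}(T_i)` for entropy. -/
def entVar [∀ i, MeasurableSpace (X i)] (r : ℕ) (T : ∀ i, X i → X i)
    (π : ∀ i, X i → X (i + 1)) (a : ℕ → ℝ) : EReal :=
  ⨆ μ : {μ : Measure (X 0) // IsProbabilityMeasure μ ∧ μ.map (T 0) = μ},
    ∑ i ∈ Finset.range r,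
      ((weight a r i : ℝ) : EReal) *
        kolSinai (Measure.map (picomp π i) (μ : Measure (X 0))) (T i)

end Var

/-- The topological space underlying a metric space structure. -/
def mTop {α : Type*} (m : MetricSpace α) : TopologicalSpace α :=
  m.toPseudoMetricSpace.toUniformSpace.toTopologicalSpace

end WTPaper

namespace WTPaper

section AuxCover

variable {Y : Type*} [MetricSpace Y]

/-- Generic cover-quantity set. -/
def covSet (T : Y → Y) (N : ℕ) (ε : ℝ) (Ω : Set Y) (g : Set Y → ℝ) : Set ℝ :=
  { s : ℝ | ∃ (n : ℕ) (U : Fin n → Set Y), (∀ j, IsOpen (U j)) ∧ (Ω ⊆ ⋃ j, U j) ∧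
      (∀ j, dynDiam T N (U j) < ENNReal.ofReal ε) ∧ s = ∑ j, g (U j) }

lemma edist_le_dynDiam (T : Y → Y) (N : ℕ) {U : Set Y} {x y : Y} (hx : x ∈ U) (hy : y ∈ U) :
    dynEDist T N x y ≤ dynDiam T N U := by
  have h1 : dynEDist T N x y ≤ ⨆ z ∈ U, dynEDist T N x z :=
    le_iSup₂ (f := fun z (_ : z ∈ U) => dynEDist T N x z) y hy
  have h2 : (⨆ z ∈ U, dynEDist T N x z) ≤ ⨆ w ∈ U, ⨆ z ∈ U, dynEDist T N w z :=
    le_iSup₂ (f := fun w (_ : w ∈ U) => ⨆ z ∈ U, dynEDist T N w z) x hx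
  simpa [dynDiam] using h1.trans h2

lemma exists_fine_cover [CompactSpace Y] {T : Y → Y} (hT : Continuous T) (N : ℕ) {ε : ℝ}
    (hε : 0 < ε) : ∃ (n : ℕ) (U : Fin n → Set Y), (∀ j, IsOpen (U j)) ∧
      (Set.univ ⊆ ⋃ j, U j) ∧ ∀ j, dynDiam T N (U j) < ENNReal.ofReal ε := by
  set r : ℝ≥0∞ := ENNReal.ofReal (ε / 3) with hr
  have hrpos : 0 < r := ENNReal.ofReal_pos.mpr (by linarith)
  set B : Y → Set Y := fun y => ⋂ k ∈ Finset.range N, (T^[k]) ⁻¹' EMetric.ball (T^[k] y) r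
    with hB
  have hBopen : ∀ y, IsOpen (B y) := fun y =>
    isOpen_biInter_finset fun k _ => EMetric.isOpen_ball.preimage (hT.iterate k)
  have hBmem : ∀ y, y ∈ B y := fun y => Set.mem_iInter₂.mpr fun k _ =>
    EMetric.mem_ball_self hrpos
  obtain ⟨t, ht⟩ := isCompact_univ.elim_finite_subcover B hBopen
    (fun x _ => Set.mem_iUnion.mpr ⟨x, hBmem x⟩)
  refine ⟨t.card, fun j => B (↑(t.equivFin.symm j)), fun j => hBopen _, ?_, ?_⟩
  · intro x hx
    obtain ⟨y, hy, hxy⟩ := Set.mem_iUnion₂.mp (ht hx)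
    refine Set.mem_iUnion.mpr ⟨t.equivFin ⟨y, hy⟩, ?_⟩
    simpa using hxy
  · intro j
    have hdiam : dynDiam T N (B (↑(t.equivFin.symm j))) ≤ r + r := by
      simp only [dynDiam]
      refine iSup₂_le fun x hx => iSup₂_le fun z hz => ?_
      simp only [dynEDist]
      refine Finset.sup_le fun k hk => ?_
      set y : Y := ↑(t.equivFin.symm j)
      have hx' : edist (T^[k] x) (T^[k] y) < r := by
        have := Set.mem_iInter₂.mp hx k hk
        exact this
      have hz' : edist (T^[k] z) (T^[k] y) < r := by
        have := Set.mem_iInter₂.mp hz k hk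
        exact this
      calc edist (T^[k] x) (T^[k] z)
          ≤ edist (T^[k] x) (T^[k] y) + edist (T^[k] y) (T^[k] z) := edist_triangle _ _ _
        _ ≤ r + r := add_le_add hx'.le (by rw [edist_comm]; exact hz'.le)
    refine lt_of_le_of_lt hdiam ?_
    rw [hr, ← ENNReal.ofReal_add (by linarith) (by linarith)]
    exact (ENNReal.ofReal_lt_ofReal_iff hε).mpr (by linarith)

lemma covSet_nonempty [CompactSpace Y] {T : Y → Y} (hT : Continuous T) (N : ℕ) {ε : ℝ}
    (hε : 0 < ε) (Ω : Set Y) (g : Set Y → ℝ) : (covSet T N ε Ω g).Nonempty := by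
  obtain ⟨n, U, h1, h2, h3⟩ := exists_fine_cover hT N hε (T := T)
  exact ⟨_, n, U, h1, (Set.subset_univ Ω).trans h2, h3, rfl⟩

lemma covSet_nonneg {T : Y → Y} {N : ℕ} {ε : ℝ} {Ω : Set Y} {g : Set Y → ℝ}
    (hg : ∀ V, 0 ≤ g V) : ∀ s ∈ covSet T N ε Ω g, 0 ≤ s := by
  rintro s ⟨n, U, -, -, -, rfl⟩
  exact Finset.sum_nonneg fun j _ => hg _

lemma covSet_bddBelow {T : Y → Y} {N : ℕ} {ε : ℝ} {Ω : Set Y} {g : Set Y → ℝ}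
    (hg : ∀ V, 0 ≤ g V) : BddBelow (covSet T N ε Ω g) :=
  ⟨0, fun s hs => covSet_nonneg hg s hs⟩

lemma le_sInf_covSet {T : Y → Y} {N : ℕ} {ε : ℝ} {Ω : Set Y} {g : Set Y → ℝ}
    (hg : ∀ V, 0 ≤ g V) {m : ℝ} (h : ∀ V : Set Y, V.Nonempty → m ≤ g V)
    (hΩ : Ω.Nonempty) (hne : (covSet T N ε Ω g).Nonempty) :
    m ≤ sInf (covSet T N ε Ω g) := by
  refine le_csInf hne ?_
  rintro s ⟨n, U, -, hcov, -, rfl⟩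
  obtain ⟨x, hx⟩ := hΩ
  obtain ⟨j, hj⟩ := Set.mem_iUnion.mp (hcov hx)
  calc m ≤ g (U j) := h _ ⟨x, hj⟩
    _ ≤ ∑ j, g (U j) := Finset.single_le_sum (fun i _ => hg _) (Finset.mem_univ j)

lemma dynDiam_inter_preimage_lt {T : Y → Y} {N M : ℕ} {e : ℝ≥0∞} {U V : Set Y}
    (hU : dynDiam T N U < e) (hV : dynDiam T M V < e) :
    dynDiam T (N + M) (U ∩ T^[N] ⁻¹' V) < e := by
  have hle : dynDiam T (N + M) (U ∩ T^[N] ⁻¹' V) ≤ max (dynDiam T N U) (dynDiam T M V) := by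
    simp only [dynDiam]
    refine iSup₂_le fun x hx => iSup₂_le fun y hy => ?_
    simp only [dynEDist]
    refine Finset.sup_le fun k hk => ?_
    have hk' : k < N + M := Finset.mem_range.mp hk
    rcases lt_or_ge k N with h | h
    · refine le_max_of_le_left ?_
      refine le_trans ?_ (edist_le_dynDiam T N hx.1 hy.1)
      exact Finset.le_sup (f := fun n => edist (T^[n] x) (T^[n] y)) (Finset.mem_range.mpr h)
    · obtain ⟨l, rfl⟩ : ∃ l, k = l + N := ⟨k - N, by omega⟩
      have hl : l < M := by omega
      refine le_max_of_le_right ?_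
      rw [Function.iterate_add_apply T l N x, Function.iterate_add_apply T l N y]
      refine le_trans ?_ (edist_le_dynDiam T M hx.2 hy.2)
      exact Finset.le_sup (f := fun n => edist (T^[n] (T^[N] x)) (T^[n] (T^[N] y)))
        (Finset.mem_range.mpr hl)
  exact lt_of_le_of_lt hle (max_lt hU hV)

lemma sInf_covSet_submul [CompactSpace Y] {T : Y → Y} (hT : Continuous T) {ε : ℝ} (hε : 0 < ε)
    (N M : ℕ) (g1 g2 g3 : Set Y → ℝ)
    (h1 : ∀ V, 0 ≤ g1 V) (h2 : ∀ V, 0 ≤ g2 V) (h3 : ∀ V, 0 ≤ g3 V)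
    (hkey : ∀ U V : Set Y, (U ∩ T^[N] ⁻¹' V).Nonempty →
      g3 (U ∩ T^[N] ⁻¹' V) ≤ g1 U * g2 V)
    (A B : Set Y) :
    sInf (covSet T (N + M) ε (A ∩ T^[N] ⁻¹' B) g3)
      ≤ sInf (covSet T N ε A g1) * sInf (covSet T M ε B g2) := by
  classical
  set QA := sInf (covSet T N ε A g1) with hQA'
  set QB := sInf (covSet T M ε B g2) with hQB'
  have hQA : 0 ≤ QA := Real.sInf_nonneg (covSet_nonneg h1)
  have hQB : 0 ≤ QB := Real.sInf_nonneg (covSet_nonneg h2)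
  have key : ∀ δ : ℝ, 0 < δ →
      sInf (covSet T (N + M) ε (A ∩ T^[N] ⁻¹' B) g3) ≤ (QA + δ) * (QB + δ) := by
    intro δ hδ
    obtain ⟨s1, hs1mem, hs1⟩ := Real.lt_sInf_add_pos (covSet_nonempty hT N hε A g1) hδ
    obtain ⟨s2, hs2mem, hs2⟩ := Real.lt_sInf_add_pos (covSet_nonempty hT M hε B g2) hδ
    obtain ⟨n, U, hUo, hUc, hUd, rfl⟩ := hs1mem
    obtain ⟨m, V, hVo, hVc, hVd, rfl⟩ := hs2mem
    set W : Fin n × Fin m → Set Y := fun p => U p.1 ∩ T^[N] ⁻¹' V p.2 with hW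
    set s : Finset (Fin n × Fin m) := Finset.univ.filter (fun p => (W p).Nonempty) with hs
    have hmem : (∑ k : Fin s.card, g3 (W (↑(s.equivFin.symm k)))) ∈
        covSet T (N + M) ε (A ∩ T^[N] ⁻¹' B) g3 := by
      refine ⟨s.card, fun k => W (↑(s.equivFin.symm k)), ?_, ?_, ?_, rfl⟩
      · intro k; exact (hUo _).inter ((hVo _).preimage (hT.iterate N))
      · rintro x ⟨hxA, hxB⟩
        obtain ⟨j, hj⟩ := Set.mem_iUnion.mp (hUc hxA)
        obtain ⟨k, hk⟩ := Set.mem_iUnion.mp (hVc hxB)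
        have hpmem : (j, k) ∈ s := Finset.mem_filter.mpr ⟨Finset.mem_univ _, ⟨x, hj, hk⟩⟩
        refine Set.mem_iUnion.mpr ⟨s.equivFin ⟨(j, k), hpmem⟩, ?_⟩
        simpa [hW] using (⟨hj, hk⟩ : x ∈ W (j, k))
      · intro k; exact dynDiam_inter_preimage_lt (hUd _) (hVd _)
    refine le_trans (csInf_le (covSet_bddBelow h3) hmem) ?_
    have e1 : (∑ k : Fin s.card, g3 (W (↑(s.equivFin.symm k)))) = ∑ p ∈ s, g3 (W p) := by
      rw [← Finset.sum_coe_sort s (fun p => g3 (W p))]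
      exact Equiv.sum_comp s.equivFin.symm (fun p : {x // x ∈ s} => g3 (W ↑p))
    rw [e1]
    have e2 : (∑ p ∈ s, g3 (W p)) ≤ ∑ p ∈ s, g1 (U p.1) * g2 (V p.2) :=
      Finset.sum_le_sum fun p hp => hkey _ _ ((Finset.mem_filter.mp hp).2)
    have e3 : (∑ p ∈ s, g1 (U p.1) * g2 (V p.2))
        ≤ ∑ p : Fin n × Fin m, g1 (U p.1) * g2 (V p.2) :=
      Finset.sum_le_sum_of_subset_of_nonneg (Finset.filter_subset _ _)
        (fun p _ _ => mul_nonneg (h1 _) (h2 _))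
    have e4 : (∑ p : Fin n × Fin m, g1 (U p.1) * g2 (V p.2))
        = (∑ j, g1 (U j)) * (∑ k, g2 (V k)) := by
      rw [Finset.sum_mul_sum]
      exact Fintype.sum_prod_type _
    calc (∑ p ∈ s, g3 (W p)) ≤ (∑ j, g1 (U j)) * (∑ k, g2 (V k)) := by
          rw [← e4]; exact e2.trans e3
      _ ≤ (QA + δ) * (QB + δ) :=
          mul_le_mul hs1.le hs2.le (Finset.sum_nonneg fun k _ => h2 _) (by linarith)
  have tends : Filter.Tendsto (fun δ : ℝ => (QA + δ) * (QB + δ))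
      (nhdsWithin 0 (Set.Ioi 0)) (nhds (QA * QB)) := by
    have hc : Filter.Tendsto (fun δ : ℝ => (QA + δ) * (QB + δ)) (nhds 0)
        (nhds ((QA + 0) * (QB + 0))) :=
      (((continuous_const.add continuous_id).mul (continuous_const.add continuous_id)).tendsto 0)
    simpa using hc.mono_left nhdsWithin_le_nhds
  exact ge_of_tendsto tends (eventually_nhdsWithin_of_forall fun δ hδ => key δ hδ)

end AuxCover

section AuxSeq

variable {X : ℕ → Type*} [∀ i, MetricSpace (X i)]

/-- The summand function of `paP` at level `i`. -/
def paG (T : ∀ i, X i → X i) (π : ∀ i, X i → X (i + 1)) (a : ℕ → ℝ) (f : X 0 → ℝ) :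
    ∀ i : ℕ, ℕ → ℝ → Set (X i) → ℝ
  | 0 => fun N _ V => Real.exp (sSup (birkhoff (T 0) f N '' V))
  | (i + 1) => fun N ε V => (paP T π a f i (π i ⁻¹' V) N ε) ^ (a i)

lemma paP_eq (T : ∀ i, X i → X i) (π : ∀ i, X i → X (i + 1)) (a : ℕ → ℝ) (f : X 0 → ℝ)
    (i : ℕ) (Ω : Set (X i)) (N : ℕ) (ε : ℝ) :
    paP T π a f i Ω N ε = sInf (covSet (T i) N ε Ω (paG T π a f i N ε)) := by
  cases i <;> rfl

lemma paG_paP_nonneg (T : ∀ i, X i → X i) (π : ∀ i, X i → X (i + 1)) (a : ℕ → ℝ)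
    (f : X 0 → ℝ) : ∀ i : ℕ,
      (∀ (N : ℕ) (ε : ℝ) (V : Set (X i)), 0 ≤ paG T π a f i N ε V) ∧
      (∀ (Ω : Set (X i)) (N : ℕ) (ε : ℝ), 0 ≤ paP T π a f i Ω N ε) := by
  intro i
  induction i with
  | zero =>
    have hg : ∀ (N : ℕ) (ε : ℝ) (V : Set (X 0)), 0 ≤ paG T π a f 0 N ε V := by
      intro N ε V; simp only [paG]; exact (Real.exp_pos _).le
    exact ⟨hg, fun Ω N ε => by
      rw [paP_eq]; exact Real.sInf_nonneg (covSet_nonneg (hg N ε))⟩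
  | succ i ih =>
    have hg : ∀ (N : ℕ) (ε : ℝ) (V : Set (X (i + 1))), 0 ≤ paG T π a f (i + 1) N ε V := by
      intro N ε V; simp only [paG]; exact Real.rpow_nonneg (ih.2 _ _ _) _
    exact ⟨hg, fun Ω N ε => by
      rw [paP_eq]; exact Real.sInf_nonneg (covSet_nonneg (hg N ε))⟩

lemma paP_empty (T : ∀ i, X i → X i) (π : ∀ i, X i → X (i + 1)) (a : ℕ → ℝ) (f : X 0 → ℝ)
    (i N : ℕ) (ε : ℝ) : paP T π a f i (∅ : Set (X i)) N ε = 0 := by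
  refine le_antisymm ?_ ((paG_paP_nonneg T π a f i).2 _ _ _)
  rw [paP_eq]
  have h0 : (0 : ℝ) ∈ covSet (T i) N ε (∅ : Set (X i)) (paG T π a f i N ε) :=
    ⟨0, Fin.elim0, fun j => j.elim0, by simp, fun j => j.elim0, by simp⟩
  exact csInf_le (covSet_bddBelow fun V => (paG_paP_nonneg T π a f i).1 N ε V) h0

lemma birkhoff_add {Z : Type*} (T : Z → Z) (f : Z → ℝ) (N M : ℕ) (x : Z) :
    birkhoff T f (N + M) x = birkhoff T f N x + birkhoff T f M (T^[N] x) := by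
  simp only [birkhoff]
  rw [Finset.sum_range_add]
  congr 1
  refine Finset.sum_congr rfl fun n _ => ?_
  rw [Nat.add_comm N n, Function.iterate_add_apply]

lemma paP_submul [∀ i, CompactSpace (X i)] (T : ∀ i, X i → X i) (hT : ∀ i, Continuous (T i))
    (π : ∀ i, X i → X (i + 1)) (hπfact : ∀ i, (π i) ∘ (T i) = (T (i + 1)) ∘ (π i))
    (a : ℕ → ℝ) (f : X 0 → ℝ) (hf : Continuous f) {ε : ℝ} (hε : 0 < ε) :
    ∀ i : ℕ, (∀ j, j < i → a j ∈ Set.Icc (0 : ℝ) 1) →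
      ∀ (N M : ℕ) (A B : Set (X i)),
        paP T π a f i (A ∩ (T i)^[N] ⁻¹' B) (N + M) ε ≤
          paP T π a f i A N ε * paP T π a f i B M ε := by
  have hbk : ∀ K : ℕ, Continuous (birkhoff (T 0) f K) := fun K =>
    continuous_finset_sum _ fun n _ => hf.comp ((hT 0).iterate n)
  have hbdd : ∀ (K : ℕ) (S : Set (X 0)), BddAbove (birkhoff (T 0) f K '' S) := fun K S =>
    BddAbove.mono (Set.image_mono (Set.subset_univ S))
      (isCompact_univ.bddAbove_image (hbk K).continuousOn)
  intro i
  induction i with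
  | zero =>
    intro _ N M A B
    rw [paP_eq, paP_eq, paP_eq]
    refine sInf_covSet_submul (hT 0) hε N M _ _ _
      (fun V => by simp only [paG]; exact (Real.exp_pos _).le)
      (fun V => by simp only [paG]; exact (Real.exp_pos _).le)
      (fun V => by simp only [paG]; exact (Real.exp_pos _).le) ?_ A B
    rintro U V ⟨x0, hx0⟩
    simp only [paG]
    rw [← Real.exp_add, Real.exp_le_exp]
    refine csSup_le (Set.Nonempty.image _ ⟨x0, hx0⟩) ?_
    rintro ρ ⟨x, hx, rfl⟩
    rw [birkhoff_add]
    exact add_le_add (le_csSup (hbdd N U) ⟨x, hx.1, rfl⟩)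
      (le_csSup (hbdd M V) ⟨(T 0)^[N] x, hx.2, rfl⟩)
  | succ i ih =>
    intro ha N M A B
    have ha' : ∀ j, j < i → a j ∈ Set.Icc (0 : ℝ) 1 :=
      fun j hj => ha j (hj.trans (Nat.lt_succ_self i))
    have hai := ha i (Nat.lt_succ_self i)
    rw [paP_eq, paP_eq, paP_eq]
    refine sInf_covSet_submul (hT (i + 1)) hε N M _ _ _
      (fun V => by
        simp only [paG]; exact Real.rpow_nonneg ((paG_paP_nonneg T π a f i).2 _ _ _) _)
      (fun V => by
        simp only [paG]; exact Real.rpow_nonneg ((paG_paP_nonneg T π a f i).2 _ _ _) _)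
      (fun V => by
        simp only [paG]; exact Real.rpow_nonneg ((paG_paP_nonneg T π a f i).2 _ _ _) _)
      ?_ A B
    intro U V _
    simp only [paG]
    have hsc : Function.Semiconj (π i) (T i) (T (i + 1)) := fun x => congrFun (hπfact i) x
    have hpre : π i ⁻¹' (U ∩ (T (i + 1))^[N] ⁻¹' V)
        = (π i ⁻¹' U) ∩ (T i)^[N] ⁻¹' (π i ⁻¹' V) := by
      rw [Set.preimage_inter, ← Set.preimage_comp, ← Set.preimage_comp,
        (hsc.iterate_right N).comp_eq]
    rw [hpre]
    calc (paP T π a f i ((π i ⁻¹' U) ∩ (T i)^[N] ⁻¹' (π i ⁻¹' V)) (N + M) ε) ^ a i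
        ≤ (paP T π a f i (π i ⁻¹' U) N ε * paP T π a f i (π i ⁻¹' V) M ε) ^ a i :=
          Real.rpow_le_rpow ((paG_paP_nonneg T π a f i).2 _ _ _) (ih ha' N M _ _) hai.1
      _ = _ := Real.mul_rpow ((paG_paP_nonneg T π a f i).2 _ _ _)
          ((paG_paP_nonneg T π a f i).2 _ _ _)

lemma paP_lower [∀ i, CompactSpace (X i)] (T : ∀ i, X i → X i) (hT : ∀ i, Continuous (T i))
    (π : ∀ i, X i → X (i + 1)) (hπsurj : ∀ i, Function.Surjective (π i))
    (a : ℕ → ℝ) (f : X 0 → ℝ) (hf : Continuous f) {ε : ℝ} (hε : 0 < ε)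
    (c : ℝ) (hc : ∀ x : X 0, c ≤ f x) :
    ∀ i : ℕ, (∀ j, j < i → 0 ≤ a j) → ∀ (N : ℕ) (Ω : Set (X i)), Ω.Nonempty →
      Real.exp ((∏ j ∈ Finset.range i, a j) * (↑N * c)) ≤ paP T π a f i Ω N ε := by
  have hbk : ∀ K : ℕ, Continuous (birkhoff (T 0) f K) := fun K =>
    continuous_finset_sum _ fun n _ => hf.comp ((hT 0).iterate n)
  have hbdd : ∀ (K : ℕ) (S : Set (X 0)), BddAbove (birkhoff (T 0) f K '' S) := fun K S =>
    BddAbove.mono (Set.image_mono (Set.subset_univ S))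
      (isCompact_univ.bddAbove_image (hbk K).continuousOn)
  intro i
  induction i with
  | zero =>
    intro _ N Ω hΩ
    rw [paP_eq]
    simp only [Finset.prod_range_zero, one_mul]
    refine le_sInf_covSet (fun V => by simp only [paG]; exact (Real.exp_pos _).le)
      ?_ hΩ (covSet_nonempty (hT 0) N hε Ω _)
    rintro V ⟨x, hx⟩
    simp only [paG]
    rw [Real.exp_le_exp]
    have hNc : (N : ℝ) * c ≤ birkhoff (T 0) f N x := by
      have := Finset.card_nsmul_le_sum (Finset.range N)
        (fun n => f ((T 0)^[n] x)) c (fun n _ => hc _)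
      simpa [nsmul_eq_mul, Finset.card_range, birkhoff] using this
    exact hNc.trans (le_csSup (hbdd N V) ⟨x, hx, rfl⟩)
  | succ i ih =>
    intro ha N Ω hΩ
    rw [paP_eq]
    refine le_sInf_covSet
      (fun V => by
        simp only [paG]; exact Real.rpow_nonneg ((paG_paP_nonneg T π a f i).2 _ _ _) _)
      ?_ hΩ (covSet_nonempty (hT (i + 1)) N hε Ω _)
    rintro V ⟨x, hx⟩
    obtain ⟨y, hy⟩ := hπsurj i x
    have hVne : (π i ⁻¹' V).Nonempty := ⟨y, by simp [Set.mem_preimage, hy, hx]⟩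
    have hIH := ih (fun j hj => ha j (hj.trans (Nat.lt_succ_self i))) N _ hVne
    simp only [paG]
    have hm : Real.exp ((∏ j ∈ Finset.range (i + 1), a j) * (↑N * c))
        = (Real.exp ((∏ j ∈ Finset.range i, a j) * (↑N * c))) ^ (a i) := by
      rw [Finset.prod_range_succ, ← Real.exp_mul]
      congr 1
      ring
    rw [hm]
    exact Real.rpow_le_rpow (Real.exp_pos _).le hIH (ha i (Nat.lt_succ_self i))

lemma nonempty_zero (π : ∀ i, X i → X (i + 1)) (hπsurj : ∀ i, Function.Surjective (π i)) :
    ∀ i, Nonempty (X i) → Nonempty (X 0) := by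
  intro i
  induction i with
  | zero => exact id
  | succ i ih =>
    rintro ⟨x⟩
    obtain ⟨y, -⟩ := hπsurj i x
    exact ih ⟨y⟩

end AuxSeq


/-- `N ↦ log P^a_r(X_r, f, N, ε)` is subadditive, and consequently
`lim_{N → ∞} (1/N) log P^a_r(X_r, f, N, ε)` exists. -/
theorem log_paP_subadditive_and_limit_exists
    (r : ℕ) (hr : 1 ≤ r)
    (X : ℕ → Type*) [∀ i, MetricSpace (X i)] [∀ i, CompactSpace (X i)]
    (T : ∀ i, X i → X i) (hT : ∀ i, Continuous (T i))
    (π : ∀ i, X i → X (i + 1))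
    (hπcont : ∀ i, Continuous (π i))
    (hπsurj : ∀ i, Function.Surjective (π i))
    (hπfact : ∀ i, (π i) ∘ (T i) = (T (i + 1)) ∘ (π i))
    (a : ℕ → ℝ) (ha : ∀ i, i < r - 1 → a i ∈ Set.Icc (0 : ℝ) 1)
    (f : X 0 → ℝ) (hf : Continuous f)
    (ε : ℝ) (hε : 0 < ε) :
    (∀ N M : ℕ,
        Real.log (paP T π a f (r - 1) Set.univ (N + M) ε)
          ≤ Real.log (paP T π a f (r - 1) Set.univ N ε)
            + Real.log (paP T π a f (r - 1) Set.univ M ε)) ∧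
      ∃ L : ℝ, Filter.Tendsto
        (fun N : ℕ => ((N : ℝ))⁻¹ * Real.log (paP T π a f (r - 1) Set.univ N ε))
        Filter.atTop (nhds L) := by
  classical
  set Q : ℕ → ℝ := fun N => paP T π a f (r - 1) Set.univ N ε with hQdef
  by_cases hne : Nonempty (X (r - 1))
  · -- the spaces are nonempty
    have hX0 : Nonempty (X 0) := nonempty_zero π hπsurj (r - 1) hne
    obtain ⟨x0⟩ := hX0
    obtain ⟨xm, -, hxm⟩ := isCompact_univ.exists_isMinOn ⟨x0, trivial⟩ hf.continuousOn
    set c := f xm with hcdef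
    have hc : ∀ x : X 0, c ≤ f x := fun x => hxm (Set.mem_univ x)
    have huniv : (Set.univ : Set (X (r - 1))).Nonempty := Set.univ_nonempty
    have hlow : ∀ N : ℕ,
        Real.exp ((∏ j ∈ Finset.range (r - 1), a j) * (↑N * c)) ≤ Q N := fun N =>
      paP_lower T hT π hπsurj a f hf hε c hc (r - 1)
        (fun j hj => (ha j hj).1) N Set.univ huniv
    have hQpos : ∀ N, 0 < Q N := fun N => lt_of_lt_of_le (Real.exp_pos _) (hlow N)
    have hsub : ∀ N M, Q (N + M) ≤ Q N * Q M := by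
      intro N M
      have h := paP_submul T hT π hπfact a f hf hε (r - 1) ha N M Set.univ Set.univ
      simpa [Set.preimage_univ, Set.univ_inter] using h
    have hlogsub : ∀ N M : ℕ, Real.log (Q (N + M)) ≤ Real.log (Q N) + Real.log (Q M) := by
      intro N M
      rw [← Real.log_mul (hQpos N).ne' (hQpos M).ne']
      exact Real.log_le_log (hQpos (N + M)) (hsub N M)
    refine ⟨hlogsub, ?_⟩
    have hsubadd : Subadditive fun N => Real.log (Q N) := fun N M => hlogsub N M
    have hbdd : BddBelow (Set.range fun n : ℕ => Real.log (Q n) / n) := by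
      refine ⟨min ((∏ j ∈ Finset.range (r - 1), a j) * c) 0, ?_⟩
      rintro x ⟨n, rfl⟩
      rcases Nat.eq_zero_or_pos n with rfl | hn
      · simpa using min_le_right ((∏ j ∈ Finset.range (r - 1), a j) * c) 0
      · refine le_trans (min_le_left _ _) ?_
        rw [le_div_iff₀ (by exact_mod_cast hn : (0 : ℝ) < n)]
        have h := Real.log_le_log (Real.exp_pos _) (hlow n)
        rw [Real.log_exp] at h
        calc (∏ j ∈ Finset.range (r - 1), a j) * c * n
            = (∏ j ∈ Finset.range (r - 1), a j) * (↑n * c) := by ring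
          _ ≤ Real.log (Q n) := h
    refine ⟨hsubadd.lim, ?_⟩
    have h := hsubadd.tendsto_lim hbdd
    simpa [div_eq_inv_mul] using h
  · -- the top space is empty
    have hempty : (Set.univ : Set (X (r - 1))) = ∅ :=
      Set.univ_eq_empty_iff.mpr (not_nonempty_iff.mp hne)
    have hQ0 : ∀ N, paP T π a f (r - 1) Set.univ N ε = 0 := by
      intro N
      rw [hempty]
      exact paP_empty T π a f (r - 1) N ε
    constructor
    · intro N M
      simp [hQ0]
    · refine ⟨0, ?_⟩
      have : (fun N : ℕ => ((N : ℝ))⁻¹ * Real.log (paP T π a f (r - 1) Set.univ N ε))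
          = fun _ => (0 : ℝ) := by
        funext N; simp [hQ0]
      rw [this]
      exact tendsto_const_nhds


end WTPaper
end
end

section
/- Let (X_i, T_i), i = 1, …, r, be dynamical systems, π_i : (X_i,T_i) → (X_{i+1},T_{i+1}) factor maps, a ∈ [0,1]^{r−1}, f : X_1 → ℝ continuous, N ∈ ℕ and ε > 0. Then P^a_r(X_r, f, N, ε) = inf{ 𝒫^a(f, N, ε, (F^(i))_i) : (F^(i))_i is a chain of open (N,ε)-covers of (X_i)_i }. -/
open Set MeasureTheory Filter Topology
open scoped ENNReal NNReal

noncomputable section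

namespace WTPaper

section Chains

variable {X : ℕ → Type*}

/-- A chain of open `(N, ε)`-covers of the sequence `(X_i)_i` (Definition 3.1):
each `F^(i)` is a finite open cover of `X i` by sets of `d^(i)_N`-diameter `< ε`, and for each
`U ∈ F^(i+1)` a subfamily `F^(i)(U) = G i U ⊆ F^(i)` is given with
`π_i⁻¹(U) ⊆ ⋃ F^(i)(U)` and `F^(i) = ⋃_{U ∈ F^(i+1)} F^(i)(U)`. -/
def IsOpenCoverChain [∀ i, MetricSpace (X i)] (T : ∀ i, X i → X i)
    (π : ∀ i, X i → X (i + 1)) (r N : ℕ) (ε : ℝ)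
    (F : ∀ i, Finset (Set (X i))) (G : ∀ i, Set (X (i + 1)) → Finset (Set (X i))) : Prop :=
  (∀ i < r, ∀ V ∈ F i, IsOpen V ∧ dynDiam (T i) N V < ENNReal.ofReal ε) ∧
  (∀ i < r, ⋃₀ ((F i : Set (Set (X i)))) = Set.univ) ∧
  (∀ i, i + 1 < r → ∀ U ∈ F (i + 1),
      G i U ⊆ F i ∧ π i ⁻¹' U ⊆ ⋃₀ ((G i U : Set (Set (X i))))) ∧
  (∀ i, i + 1 < r → ∀ V ∈ F i, ∃ U ∈ F (i + 1), V ∈ G i U)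

/-- The value `𝒫^a(f, N, ε, (F^(i))_i)` of a chain: the nested sum
`∑_{U^(r) ∈ F^(r)} ( ∑_{U^(r-1) ∈ F^(r-1)(U^(r))} ( ⋯ ( ∑_{U^(1) ∈ F^(1)(U^(2))}
e^{sup_{U^(1)} S_N f} )^{a_1} ⋯ )^{a_{r-2}} )^{a_{r-1}}`, computed here recursively
(`chainVal … i S` is the inner value over the family `S` at level `i`, 0-based). -/
def chainVal (T : ∀ i, X i → X i) (a : ℕ → ℝ) (f : X 0 → ℝ) (N : ℕ)
    (G : ∀ i, Set (X (i + 1)) → Finset (Set (X i))) : ∀ i : ℕ, Finset (Set (X i)) → ℝ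
  | 0 => fun S => ∑ U ∈ S, Real.exp (sSup (birkhoff (T 0) f N '' U))
  | (i + 1) => fun S => ∑ U ∈ S, (chainVal T a f N G i (G i U)) ^ (a i)

end Chains


section Helpers
set_option linter.unusedSectionVars false

variable {X : ℕ → Type*} [∀ i, MetricSpace (X i)]
variable (T : ∀ i, X i → X i) (π : ∀ i, X i → X (i + 1)) (a : ℕ → ℝ) (f : X 0 → ℝ)
variable (N : ℕ) (ε : ℝ)

lemma paP_zero_def (Ω : Set (X 0)) :
    paP T π a f 0 Ω N ε = sInf { s : ℝ | ∃ (n : ℕ) (U : Fin n → Set (X 0)),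
        (∀ j, IsOpen (U j)) ∧ (Ω ⊆ ⋃ j, U j) ∧
        (∀ j, dynDiam (T 0) N (U j) < ENNReal.ofReal ε) ∧
        s = ∑ j, Real.exp (sSup (birkhoff (T 0) f N '' U j)) } := rfl

lemma paP_succ_def (i : ℕ) (Ω : Set (X (i+1))) :
    paP T π a f (i+1) Ω N ε = sInf { s : ℝ | ∃ (n : ℕ) (U : Fin n → Set (X (i + 1))),
        (∀ j, IsOpen (U j)) ∧ (Ω ⊆ ⋃ j, U j) ∧
        (∀ j, dynDiam (T (i + 1)) N (U j) < ENNReal.ofReal ε) ∧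
        s = ∑ j, (paP T π a f i (π i ⁻¹' U j) N ε) ^ (a i) } := rfl

lemma chainVal_zero_def (G : ∀ i, Set (X (i + 1)) → Finset (Set (X i))) (S : Finset (Set (X 0))) :
    chainVal T a f N G 0 S = ∑ U ∈ S, Real.exp (sSup (birkhoff (T 0) f N '' U)) := rfl

lemma chainVal_succ_def (G : ∀ i, Set (X (i + 1)) → Finset (Set (X i))) (i : ℕ)
    (S : Finset (Set (X (i+1)))) :
    chainVal T a f N G (i+1) S = ∑ U ∈ S, (chainVal T a f N G i (G i U)) ^ (a i) := rfl

lemma paP_nonneg (i : ℕ) (Ω : Set (X i)) : 0 ≤ paP T π a f i Ω N ε := by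
  induction i with
  | zero =>
    refine Real.sInf_nonneg fun x hx => ?_
    obtain ⟨n, U, -, -, -, rfl⟩ := hx
    exact Finset.sum_nonneg fun j _ => (Real.exp_pos _).le
  | succ i ih =>
    refine Real.sInf_nonneg fun x hx => ?_
    obtain ⟨n, U, -, -, -, rfl⟩ := hx
    exact Finset.sum_nonneg fun j _ => Real.rpow_nonneg (ih _) _

lemma chainVal_nonneg (G : ∀ i, Set (X (i + 1)) → Finset (Set (X i))) (i : ℕ)
    (S : Finset (Set (X i))) : 0 ≤ chainVal T a f N G i S := by
  induction i with
  | zero => exact Finset.sum_nonneg fun j _ => (Real.exp_pos _).le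
  | succ i ih => exact Finset.sum_nonneg fun U _ => Real.rpow_nonneg (ih _) _

lemma chainVal_congr {G G' : ∀ i, Set (X (i + 1)) → Finset (Set (X i))} (i : ℕ)
    (h : ∀ j < i, G j = G' j) (S : Finset (Set (X i))) :
    chainVal T a f N G i S = chainVal T a f N G' i S := by
  induction i with
  | zero => rfl
  | succ i ih =>
    rw [chainVal_succ_def, chainVal_succ_def]
    refine Finset.sum_congr rfl fun U _ => ?_
    rw [h i (Nat.lt_succ_self i), ih fun j hj => h j (hj.trans (Nat.lt_succ_self i))]

lemma exists_global_cover [∀ i, CompactSpace (X i)] (hT : ∀ i, Continuous (T i))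
    (hε : 0 < ε) (i : ℕ) :
    ∃ S : Finset (Set (X i)),
      (∀ V ∈ S, IsOpen V ∧ dynDiam (T i) N V < ENNReal.ofReal ε) ∧
      (∀ V ∈ S, V.Nonempty) ∧
      ⋃₀ (S : Set (Set (X i))) = Set.univ := by
  classical
  set B : X i → Set (X i) :=
    fun x => ⋂ n ∈ Finset.range N, (T i)^[n] ⁻¹' Metric.ball ((T i)^[n] x) (ε/3) with hB
  have hopen : ∀ x, IsOpen (B x) := fun x =>
    isOpen_biInter_finset fun n _ => Metric.isOpen_ball.preimage ((hT i).iterate n)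
  have hmem : ∀ x, x ∈ B x := fun x =>
    Set.mem_iInter₂.2 fun n _ => by simp [Metric.mem_ball]; positivity
  have hdiam : ∀ x, dynDiam (T i) N (B x) < ENNReal.ofReal ε := by
    intro x
    have h2 : dynDiam (T i) N (B x) ≤ ENNReal.ofReal (2*ε/3) := by
      refine iSup₂_le fun y hy => iSup₂_le fun z hz => Finset.sup_le fun n hn => ?_
      have hy' := Set.mem_iInter₂.1 hy n hn
      have hz' := Set.mem_iInter₂.1 hz n hn
      rw [Set.mem_preimage, Metric.mem_ball] at hy' hz'
      rw [edist_dist, ENNReal.ofReal_le_ofReal_iff (by positivity)]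
      calc dist ((T i)^[n] y) ((T i)^[n] z)
          ≤ dist ((T i)^[n] y) ((T i)^[n] x) + dist ((T i)^[n] x) ((T i)^[n] z) :=
            dist_triangle _ _ _
        _ ≤ ε/3 + ε/3 := add_le_add hy'.le (by rw [dist_comm]; exact hz'.le)
        _ = 2*ε/3 := by ring
    exact lt_of_le_of_lt h2 (by rw [ENNReal.ofReal_lt_ofReal_iff hε]; linarith)
  obtain ⟨t, ht⟩ := isCompact_univ.elim_finite_subcover B hopen
    (fun x _ => Set.mem_iUnion.2 ⟨x, hmem x⟩)
  refine ⟨t.image B, ?_, ?_, ?_⟩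
  · intro V hV; obtain ⟨x, -, rfl⟩ := Finset.mem_image.1 hV; exact ⟨hopen x, hdiam x⟩
  · intro V hV; obtain ⟨x, -, rfl⟩ := Finset.mem_image.1 hV; exact ⟨x, hmem x⟩
  · apply Set.eq_univ_of_univ_subset
    intro y hy
    obtain ⟨x, hx, hyW⟩ := Set.mem_iUnion₂.1 (ht hy)
    exact ⟨B x, Finset.mem_coe.2 (Finset.mem_image_of_mem B hx), hyW⟩


lemma sum_image_le' {α β : Type*} [DecidableEq β] (s : Finset α) (g : α → β) (v : β → ℝ)
    (hv : ∀ b, 0 ≤ v b) : ∑ b ∈ s.image g, v b ≤ ∑ x ∈ s, v (g x) := by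
  rw [Finset.sum_comp v g]
  refine Finset.sum_le_sum fun b hb => ?_
  obtain ⟨x, hx, hgx⟩ := Finset.mem_image.1 hb
  have hcard : 1 ≤ (s.filter fun a => g a = b).card :=
    Finset.card_pos.2 ⟨x, Finset.mem_filter.2 ⟨hx, hgx⟩⟩
  calc v b = 1 * v b := (one_mul _).symm
    _ ≤ (s.filter fun a => g a = b).card * v b := by
        exact mul_le_mul_of_nonneg_right (by exact_mod_cast hcard) (hv b)
    _ = (s.filter fun a => g a = b).card • v b := (nsmul_eq_mul _ _).symm

lemma real_rpow_add_le {x y p : ℝ} (hx : 0 ≤ x) (hy : 0 ≤ y) (hp : 0 ≤ p) (hp1 : p ≤ 1) :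
    (x + y) ^ p ≤ x ^ p + y ^ p := by
  have h := NNReal.rpow_add_le_add_rpow x.toNNReal y.toNNReal hp hp1
  have hco : ((x.toNNReal + y.toNNReal : ℝ≥0) : ℝ) = x + y := by
    simp [Real.coe_toNNReal x hx, Real.coe_toNNReal y hy]
  have := NNReal.coe_le_coe.2 h
  rw [NNReal.coe_add] at this
  simpa [NNReal.coe_rpow, Real.coe_toNNReal x hx, Real.coe_toNNReal y hy, hco] using this

lemma exists_eta {p c : ℝ} (hp : p ∈ Set.Icc (0:ℝ) 1) (hc : 0 < c) :
    ∃ η : ℝ, 0 < η ∧ ∀ x : ℝ, 0 ≤ x → (x + η) ^ p ≤ x ^ p + c := by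
  rcases eq_or_lt_of_le hp.1 with hp0 | hp0
  · exact ⟨1, one_pos, fun x hx => by
      rw [← hp0, Real.rpow_zero, Real.rpow_zero]; linarith⟩
  · refine ⟨c ^ (1/p), Real.rpow_pos_of_pos hc _, fun x hx => ?_⟩
    have hsub := real_rpow_add_le hx (Real.rpow_pos_of_pos hc (1/p)).le hp.1 hp.2
    have hcc : (c ^ (1/p)) ^ p = c := by
      rw [← Real.rpow_mul hc.le, one_div, inv_mul_cancel₀ hp0.ne', Real.rpow_one]
    rw [hcc] at hsub
    exact hsub


lemma exists_fin_cover [∀ i, CompactSpace (X i)] (hT : ∀ i, Continuous (T i)) (hε : 0 < ε)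
    (i : ℕ) :
    ∃ (n : ℕ) (U : Fin n → Set (X i)), (∀ j, IsOpen (U j)) ∧ (Set.univ ⊆ ⋃ j, U j) ∧
      ∀ j, dynDiam (T i) N (U j) < ENNReal.ofReal ε := by
  obtain ⟨S, hS1, -, hS3⟩ := exists_global_cover T N ε hT hε i
  refine ⟨S.card, fun j => ((S.equivFin.symm j : {x // x ∈ S}) : Set (X i)), ?_, ?_, ?_⟩
  · intro j; exact (hS1 _ (S.equivFin.symm j).2).1
  · intro x _
    have : x ∈ ⋃₀ (S : Set (Set (X i))) := hS3 ▸ Set.mem_univ x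
    obtain ⟨V, hV, hxV⟩ := this
    refine Set.mem_iUnion.2 ⟨S.equivFin ⟨V, hV⟩, ?_⟩
    simpa using hxV
  · intro j; exact (hS1 _ (S.equivFin.symm j).2).2

lemma paP_le_sum_aux (i : ℕ) (v : Set (X i) → ℝ)
    (S : Finset (Set (X i)))
    (hS : ∀ V ∈ S, IsOpen V ∧ dynDiam (T i) N V < ENNReal.ofReal ε)
    (Ω : Set (X i)) (hΩ : Ω ⊆ ⋃₀ (S : Set (Set (X i))))
    (hbdd : BddBelow { s : ℝ | ∃ (n : ℕ) (U : Fin n → Set (X i)),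
        (∀ j, IsOpen (U j)) ∧ (Ω ⊆ ⋃ j, U j) ∧
        (∀ j, dynDiam (T i) N (U j) < ENNReal.ofReal ε) ∧
        s = ∑ j, v (U j) }) :
    sInf { s : ℝ | ∃ (n : ℕ) (U : Fin n → Set (X i)),
        (∀ j, IsOpen (U j)) ∧ (Ω ⊆ ⋃ j, U j) ∧
        (∀ j, dynDiam (T i) N (U j) < ENNReal.ofReal ε) ∧
        s = ∑ j, v (U j) } ≤ ∑ V ∈ S, v V := by
  refine csInf_le hbdd ?_
  refine ⟨S.card, fun j => ((S.equivFin.symm j : {x // x ∈ S}) : Set (X i)), ?_, ?_, ?_, ?_⟩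
  · intro j; exact (hS _ (S.equivFin.symm j).2).1
  · intro x hx
    obtain ⟨V, hV, hxV⟩ := hΩ hx
    refine Set.mem_iUnion.2 ⟨S.equivFin ⟨V, hV⟩, ?_⟩
    simpa using hxV
  · intro j; exact (hS _ (S.equivFin.symm j).2).2
  · rw [← Finset.sum_coe_sort S v]
    exact Fintype.sum_equiv S.equivFin (fun x => v ↑x)
      (fun j => v ↑(S.equivFin.symm j)) (fun x => congrArg v (congrArg _ (S.equivFin.symm_apply_apply x).symm))

lemma exists_good_finset_aux [∀ i, CompactSpace (X i)] (hT : ∀ i, Continuous (T i))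
    (hε : 0 < ε) (i : ℕ) (v : Set (X i) → ℝ) (hv : ∀ V, 0 ≤ v V)
    (Ω : Set (X i)) (δ : ℝ) (hδ : 0 < δ) :
    ∃ S : Finset (Set (X i)),
      (∀ V ∈ S, IsOpen V ∧ dynDiam (T i) N V < ENNReal.ofReal ε) ∧
      Ω ⊆ ⋃₀ (S : Set (Set (X i))) ∧
      ∑ V ∈ S, v V ≤ sInf { s : ℝ | ∃ (n : ℕ) (U : Fin n → Set (X i)),
        (∀ j, IsOpen (U j)) ∧ (Ω ⊆ ⋃ j, U j) ∧
        (∀ j, dynDiam (T i) N (U j) < ENNReal.ofReal ε) ∧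
        s = ∑ j, v (U j) } + δ := by
  classical
  have hbdd : BddBelow { s : ℝ | ∃ (n : ℕ) (U : Fin n → Set (X i)),
      (∀ j, IsOpen (U j)) ∧ (Ω ⊆ ⋃ j, U j) ∧
      (∀ j, dynDiam (T i) N (U j) < ENNReal.ofReal ε) ∧
      s = ∑ j, v (U j) } := by
    refine ⟨0, fun s hs => ?_⟩
    obtain ⟨n, U, -, -, -, rfl⟩ := hs
    exact Finset.sum_nonneg fun j _ => hv _
  have hne : Set.Nonempty { s : ℝ | ∃ (n : ℕ) (U : Fin n → Set (X i)),
      (∀ j, IsOpen (U j)) ∧ (Ω ⊆ ⋃ j, U j) ∧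
      (∀ j, dynDiam (T i) N (U j) < ENNReal.ofReal ε) ∧
      s = ∑ j, v (U j) } := by
    obtain ⟨n, U, h1, h2, h3⟩ := exists_fin_cover T N ε hT hε i
    exact ⟨∑ j, v (U j), n, U, h1, fun x hx => h2 (Set.mem_univ x), h3, rfl⟩
  obtain ⟨s, hs, hslt⟩ := (csInf_lt_iff hbdd hne).1 (lt_add_of_pos_right _ hδ)
  obtain ⟨n, U, hop, hcov, hdm, rfl⟩ := hs
  refine ⟨Finset.image U Finset.univ, ?_, ?_, ?_⟩
  · intro V hV; obtain ⟨j, -, rfl⟩ := Finset.mem_image.1 hV; exact ⟨hop j, hdm j⟩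
  · intro x hx
    obtain ⟨j, hj⟩ := Set.mem_iUnion.1 (hcov hx)
    exact ⟨U j, Finset.mem_coe.2 (Finset.mem_image_of_mem U (Finset.mem_univ j)), hj⟩
  · exact le_trans (sum_image_le' Finset.univ U v hv) hslt.le

lemma Pset_bddBelow_zero (Ω : Set (X 0)) :
    BddBelow { s : ℝ | ∃ (n : ℕ) (U : Fin n → Set (X 0)),
        (∀ j, IsOpen (U j)) ∧ (Ω ⊆ ⋃ j, U j) ∧
        (∀ j, dynDiam (T 0) N (U j) < ENNReal.ofReal ε) ∧
        s = ∑ j, Real.exp (sSup (birkhoff (T 0) f N '' U j)) } := by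
  refine ⟨0, fun s hs => ?_⟩
  obtain ⟨n, U, -, -, -, rfl⟩ := hs
  exact Finset.sum_nonneg fun j _ => (Real.exp_pos _).le

lemma Pset_bddBelow_succ (i : ℕ) (Ω : Set (X (i+1))) :
    BddBelow { s : ℝ | ∃ (n : ℕ) (U : Fin n → Set (X (i + 1))),
        (∀ j, IsOpen (U j)) ∧ (Ω ⊆ ⋃ j, U j) ∧
        (∀ j, dynDiam (T (i + 1)) N (U j) < ENNReal.ofReal ε) ∧
        s = ∑ j, (paP T π a f i (π i ⁻¹' U j) N ε) ^ (a i) } := by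
  refine ⟨0, fun s hs => ?_⟩
  obtain ⟨n, U, -, -, -, rfl⟩ := hs
  exact Finset.sum_nonneg fun j _ => Real.rpow_nonneg (paP_nonneg T π a f N ε i _) _


lemma chain_approx [∀ i, CompactSpace (X i)] (hT : ∀ i, Continuous (T i)) (hε : 0 < ε) :
    ∀ i : ℕ, (∀ j, j < i → a j ∈ Set.Icc (0:ℝ) 1) →
    ∀ δ : ℝ, 0 < δ → ∀ 𝒱 : Finset (Set (X (i+1))),
    ∃ (F : ∀ j, Finset (Set (X j))) (G : ∀ j, Set (X (j + 1)) → Finset (Set (X j))),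
      (∀ j ≤ i, ∀ V ∈ F j, IsOpen V ∧ dynDiam (T j) N V < ENNReal.ofReal ε) ∧
      (∀ U ∈ 𝒱, G i U ⊆ F i ∧ π i ⁻¹' U ⊆ ⋃₀ ((G i U : Set (Set (X i)))) ∧
        chainVal T a f N G i (G i U) ≤ paP T π a f i (π i ⁻¹' U) N ε + δ) ∧
      (∀ V ∈ F i, ∃ U ∈ 𝒱, V ∈ G i U) ∧
      (∀ j < i, ∀ U ∈ F (j+1), G j U ⊆ F j ∧ π j ⁻¹' U ⊆ ⋃₀ ((G j U : Set (Set (X j))))) ∧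
      (∀ j < i, ∀ V ∈ F j, ∃ U ∈ F (j+1), V ∈ G j U) := by
  intro i
  induction i with
  | zero =>
    intro _ δ hδ 𝒱
    classical
    choose C hC using fun U : Set (X 1) =>
      exists_good_finset_aux T N ε hT hε 0
        (fun V => Real.exp (sSup (birkhoff (T 0) f N '' V)))
        (fun V => (Real.exp_pos _).le) (π 0 ⁻¹' U) δ hδ
    refine ⟨Function.update (fun j => (∅ : Finset (Set (X j)))) 0 (𝒱.biUnion C),
      Function.update (fun j => fun _ : Set (X (j+1)) => (∅ : Finset (Set (X j)))) 0 C,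
      ?_, ?_, ?_, ?_, ?_⟩
    · intro j hj V hV
      obtain rfl := Nat.le_zero.mp hj
      rw [Function.update_self] at hV
      obtain ⟨U, hU, hVU⟩ := Finset.mem_biUnion.1 hV
      exact (hC U).1 V hVU
    · intro U hU
      refine ⟨?_, (hC U).2.1, (hC U).2.2⟩
      rw [Function.update_self, Function.update_self]
      exact Finset.subset_biUnion_of_mem C hU
    · intro V hV
      rw [Function.update_self] at hV
      obtain ⟨U, hU, hVU⟩ := Finset.mem_biUnion.1 hV
      exact ⟨U, hU, hVU⟩
    · intro j hj; omega
    · intro j hj; omega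
  | succ i ih =>
    intro haI δ hδ 𝒱
    classical
    choose C hC using fun U : Set (X (i+2)) =>
      exists_good_finset_aux T N ε hT hε (i+1)
        (fun V => (paP T π a f i (π i ⁻¹' V) N ε) ^ (a i))
        (fun V => Real.rpow_nonneg (paP_nonneg T π a f N ε i _) _)
        (π (i+1) ⁻¹' U) (δ/2) (half_pos hδ)
    set M : ℕ := (𝒱.sup fun U => (C U).card) + 1 with hM
    have hMpos : (0:ℝ) < (M:ℝ) := by positivity
    have hcpos : 0 < δ / (2*(M:ℝ)) := by positivity
    obtain ⟨η, hη, hηs⟩ := exists_eta (haI i (Nat.lt_succ_self i)) hcpos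
    obtain ⟨Flow, Glow, h1, h2, h3, h4, h5⟩ :=
      ih (fun j hj => haI j (hj.trans (Nat.lt_succ_self i))) η hη (𝒱.biUnion C)
    set G' := Function.update Glow (i+1) C with hG'
    have hG'top : G' (i+1) = C := Function.update_self _ _ _
    have hG'low : ∀ j, j ≠ i + 1 → G' j = Glow j :=
      fun j hj => Function.update_of_ne hj _ _
    set F' := Function.update Flow (i+1) (𝒱.biUnion C) with hF'
    have hF'top : F' (i+1) = 𝒱.biUnion C := Function.update_self _ _ _
    have hF'low : ∀ j, j ≠ i + 1 → F' j = Flow j :=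
      fun j hj => Function.update_of_ne hj _ _
    have hcv : ∀ S : Finset (Set (X (i+1))), chainVal T a f N G' (i+1) S =
        ∑ V ∈ S, (chainVal T a f N Glow i (Glow i V)) ^ (a i) := by
      intro S
      rw [chainVal_succ_def]
      refine Finset.sum_congr rfl fun V hV => ?_
      rw [show G' i = Glow i from hG'low i (by omega),
        chainVal_congr T a f N i (fun j hj => hG'low j (by omega)) _]
    refine ⟨F', G', ?_, ?_, ?_, ?_, ?_⟩
    · intro j hj V hV
      by_cases hji : j = i + 1
      · subst hji
        rw [hF'top] at hV
        obtain ⟨U, hU, hVU⟩ := Finset.mem_biUnion.1 hV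
        exact (hC U).1 V hVU
      · rw [hF'low j hji] at hV
        exact h1 j (by omega) V hV
    · intro U hU
      rw [hG'top, hF'top]
      refine ⟨Finset.subset_biUnion_of_mem C hU, (hC U).2.1, ?_⟩
      rw [hcv]
      have h2' : ∑ V ∈ C U, (paP T π a f i (π i ⁻¹' V) N ε) ^ (a i)
          ≤ paP T π a f (i+1) (π (i+1) ⁻¹' U) N ε + δ/2 := (hC U).2.2
      have hcard : ((C U).card : ℝ) ≤ (M:ℝ) := by
        have h' : (C U).card ≤ 𝒱.sup fun U => (C U).card := Finset.le_sup (f := fun U => (C U).card) hU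
        exact_mod_cast h'.trans (Nat.le_succ _)
      have hcardmul : ((C U).card : ℝ) * (δ/(2*(M:ℝ))) ≤ δ/2 := by
        calc ((C U).card : ℝ) * (δ/(2*(M:ℝ))) ≤ (M:ℝ) * (δ/(2*(M:ℝ))) :=
              mul_le_mul_of_nonneg_right hcard hcpos.le
          _ = δ/2 := by field_simp
      calc ∑ V ∈ C U, (chainVal T a f N Glow i (Glow i V)) ^ (a i)
          ≤ ∑ V ∈ C U, (paP T π a f i (π i ⁻¹' V) N ε + η) ^ (a i) := by
            refine Finset.sum_le_sum fun V hV => ?_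
            refine Real.rpow_le_rpow (chainVal_nonneg T a f N Glow i _) ?_
              (haI i (Nat.lt_succ_self i)).1
            exact (h2 V (Finset.mem_biUnion.2 ⟨U, hU, hV⟩)).2.2
        _ ≤ ∑ V ∈ C U, ((paP T π a f i (π i ⁻¹' V) N ε) ^ (a i) + δ/(2*(M:ℝ))) :=
            Finset.sum_le_sum fun V hV => hηs _ (paP_nonneg T π a f N ε i _)
        _ = (∑ V ∈ C U, (paP T π a f i (π i ⁻¹' V) N ε) ^ (a i))
              + ((C U).card : ℝ) * (δ/(2*(M:ℝ))) := by
            rw [Finset.sum_add_distrib, Finset.sum_const, nsmul_eq_mul]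
        _ ≤ (paP T π a f (i+1) (π (i+1) ⁻¹' U) N ε + δ/2) + δ/2 :=
            add_le_add h2' hcardmul
        _ = paP T π a f (i+1) (π (i+1) ⁻¹' U) N ε + δ := by ring
    · intro V hV
      rw [hF'top] at hV
      obtain ⟨U, hU, hVU⟩ := Finset.mem_biUnion.1 hV
      rw [hG'top]
      exact ⟨U, hU, hVU⟩
    · intro j hj U hU
      by_cases hji : j = i
      · subst hji
        rw [hF'top] at hU
        rw [hG'low j (by omega), hF'low j (by omega)]
        exact ⟨(h2 U hU).1, (h2 U hU).2.1⟩
      · rw [hF'low (j+1) (by omega)] at hU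
        rw [hG'low j (by omega), hF'low j (by omega)]
        exact h4 j (by omega) U hU
    · intro j hj V hV
      by_cases hji : j = i
      · subst hji
        rw [hF'low j (by omega)] at hV
        rw [hF'top]
        obtain ⟨U, hU, hVU⟩ := h3 V hV
        exact ⟨U, hU, by rw [hG'low j (by omega)]; exact hVU⟩
      · rw [hF'low j (by omega)] at hV
        rw [hF'low (j+1) (by omega)]
        obtain ⟨U, hU, hVU⟩ := h5 j (by omega) V hV
        exact ⟨U, hU, by rw [hG'low j (by omega)]; exact hVU⟩


lemma paP_le_chainVal (r : ℕ) (ha : ∀ i, i < r - 1 → a i ∈ Set.Icc (0:ℝ) 1)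
    (F : ∀ i, Finset (Set (X i))) (G : ∀ i, Set (X (i + 1)) → Finset (Set (X i)))
    (hchain : IsOpenCoverChain T π r N ε F G) :
    ∀ i, i < r → ∀ S : Finset (Set (X i)), S ⊆ F i → ∀ Ω : Set (X i),
      Ω ⊆ ⋃₀ (S : Set (Set (X i))) → paP T π a f i Ω N ε ≤ chainVal T a f N G i S := by
  intro i
  induction i with
  | zero =>
    intro hr S hS Ω hΩ
    rw [paP_zero_def, chainVal_zero_def]
    exact paP_le_sum_aux T N ε 0 (fun V => Real.exp (sSup (birkhoff (T 0) f N '' V))) S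
      (fun V hV => hchain.1 0 hr V (hS hV)) Ω hΩ (Pset_bddBelow_zero T f N ε Ω)
  | succ i ihp =>
    intro hr S hS Ω hΩ
    have h1 : paP T π a f (i+1) Ω N ε
        ≤ ∑ V ∈ S, (paP T π a f i (π i ⁻¹' V) N ε) ^ (a i) := by
      rw [paP_succ_def]
      exact paP_le_sum_aux T N ε (i+1) (fun V => (paP T π a f i (π i ⁻¹' V) N ε) ^ (a i)) S
        (fun V hV => hchain.1 (i+1) hr V (hS hV)) Ω hΩ (Pset_bddBelow_succ T π a f N ε i Ω)
    rw [chainVal_succ_def]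
    refine h1.trans (Finset.sum_le_sum fun V hV => ?_)
    obtain ⟨hsub, hcov⟩ := hchain.2.2.1 i hr V (hS hV)
    refine Real.rpow_le_rpow (paP_nonneg T π a f N ε i _) ?_ (ha i (by omega)).1
    exact ihp (by omega) (G i V) hsub _ hcov

lemma exists_trivial_chain [∀ i, CompactSpace (X i)] (hT : ∀ i, Continuous (T i))
    (hε : 0 < ε) (r : ℕ) :
    ∃ (F : ∀ i, Finset (Set (X i))) (G : ∀ i, Set (X (i + 1)) → Finset (Set (X i))),
      IsOpenCoverChain T π r N ε F G := by
  classical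
  choose S hS1 hS2 hS3 using fun i => exists_global_cover T N ε hT hε i
  refine ⟨S, fun i _ => S i, fun i _ V hV => hS1 i V hV, fun i _ => hS3 i, ?_, ?_⟩
  · intro i _ U _
    exact ⟨Finset.Subset.refl _, by rw [hS3 i]; exact Set.subset_univ _⟩
  · intro i _ V hV
    obtain ⟨x, hx⟩ := hS2 i V hV
    have hmem : π i x ∈ ⋃₀ ((S (i+1) : Set (Set (X (i+1))))) := by
      rw [hS3 (i+1)]; trivial
    obtain ⟨U, hU, -⟩ := hmem
    exact ⟨U, hU, hV⟩

end Helpers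

/-- **Remark 3.2**: `P^a_r(X_r, f, N, ε)` equals the infimum of `𝒫^a(f, N, ε, (F^(i))_i)`
over all chains of open `(N, ε)`-covers of `(X_i)_i`. -/
theorem paP_eq_inf_over_chains
    (r : ℕ) (hr : 1 ≤ r)
    (X : ℕ → Type*) [∀ i, MetricSpace (X i)] [∀ i, CompactSpace (X i)]
    (T : ∀ i, X i → X i) (hT : ∀ i, Continuous (T i))
    (π : ∀ i, X i → X (i + 1))
    (hπcont : ∀ i, Continuous (π i))
    (hπsurj : ∀ i, Function.Surjective (π i))
    (hπfact : ∀ i, (π i) ∘ (T i) = (T (i + 1)) ∘ (π i))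
    (a : ℕ → ℝ) (ha : ∀ i, i < r - 1 → a i ∈ Set.Icc (0 : ℝ) 1)
    (f : X 0 → ℝ) (hf : Continuous f)
    (N : ℕ) (ε : ℝ) (hε : 0 < ε) :
    paP T π a f (r - 1) Set.univ N ε
      = sInf { v : ℝ | ∃ (F : ∀ i, Finset (Set (X i)))
          (G : ∀ i, Set (X (i + 1)) → Finset (Set (X i))),
          IsOpenCoverChain T π r N ε F G ∧ v = chainVal T a f N G (r - 1) (F (r - 1)) } := by
  classical
  set Cs : Set ℝ := { v : ℝ | ∃ (F : ∀ i, Finset (Set (X i)))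
      (G : ∀ i, Set (X (i + 1)) → Finset (Set (X i))),
      IsOpenCoverChain T π r N ε F G ∧ v = chainVal T a f N G (r - 1) (F (r - 1)) } with hCs
  have hCne : Cs.Nonempty := by
    obtain ⟨F, G, hc⟩ := exists_trivial_chain T π N ε hT hε r
    exact ⟨chainVal T a f N G (r-1) (F (r-1)), F, G, hc, rfl⟩
  have hCb : BddBelow Cs := by
    refine ⟨0, ?_⟩
    rintro v ⟨F, G, hc, rfl⟩
    exact chainVal_nonneg T a f N G _ _
  refine le_antisymm (le_csInf hCne ?_) ?_
  · rintro v ⟨F, G, hc, rfl⟩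
    refine paP_le_chainVal T π a f N ε r ha F G hc (r-1) (by omega) (F (r-1))
      (Finset.Subset.refl _) Set.univ ?_
    rw [hc.2.1 (r-1) (by omega)]
  · have key : ∀ δ : ℝ, 0 < δ →
        sInf Cs ≤ paP T π a f (r - 1) Set.univ N ε + δ := by
      intro δ hδ
      rcases Nat.lt_or_ge r 2 with h2r | h2r
      · have hr1 : r = 1 := by omega
        subst hr1
        obtain ⟨S, hS1, hS2, hS3⟩ := exists_good_finset_aux T N ε hT hε 0
          (fun V => Real.exp (sSup (birkhoff (T 0) f N '' V)))
          (fun V => (Real.exp_pos _).le) Set.univ δ hδ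
        have hchain : IsOpenCoverChain T π 1 N ε
            (Function.update (fun j => (∅ : Finset (Set (X j)))) 0 S)
            (fun j _ => (∅ : Finset (Set (X j)))) := by
          refine ⟨?_, ?_, ?_, ?_⟩
          · intro i hi V hV
            obtain rfl : i = 0 := by omega
            rw [Function.update_self] at hV
            exact hS1 V hV
          · intro i hi
            obtain rfl : i = 0 := by omega
            rw [Function.update_self]
            exact Set.univ_subset_iff.1 hS2
          · intro i hi; omega
          · intro i hi; omega
        have hmem : chainVal T a f N (fun j _ => (∅ : Finset (Set (X j)))) (1-1)
            ((Function.update (fun j => (∅ : Finset (Set (X j)))) 0 S) (1-1)) ∈ Cs := by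
          rw [hCs]
          exact ⟨_, _, hchain, rfl⟩
        have hle : chainVal T a f N (fun j _ => (∅ : Finset (Set (X j)))) 0
            ((Function.update (fun j => (∅ : Finset (Set (X j)))) 0 S) 0)
            ≤ paP T π a f 0 Set.univ N ε + δ := by
          rw [Function.update_self, chainVal_zero_def]
          exact hS3
        exact le_trans (csInf_le hCb hmem) hle
      · obtain ⟨s, rfl⟩ : ∃ s, r = s + 2 := ⟨r - 2, by omega⟩
        obtain ⟨𝒱, hV1, hV2, hV3⟩ := exists_good_finset_aux T N ε hT hε (s+1)
          (fun V => (paP T π a f s (π s ⁻¹' V) N ε) ^ (a s))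
          (fun V => Real.rpow_nonneg (paP_nonneg T π a f N ε s _) _)
          Set.univ (δ/2) (half_pos hδ)
        have hV3' : ∑ V ∈ 𝒱, (paP T π a f s (π s ⁻¹' V) N ε) ^ (a s)
            ≤ paP T π a f (s+1) Set.univ N ε + δ/2 := hV3
        set M : ℕ := 𝒱.card + 1 with hM
        have hMpos : (0:ℝ) < (M:ℝ) := by positivity
        have hcpos : 0 < δ / (2*(M:ℝ)) := by positivity
        obtain ⟨η, hη, hηs⟩ := exists_eta (ha s (by omega)) hcpos
        obtain ⟨Flow, Glow, h1, h2, h3, h4, h5⟩ :=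
          chain_approx T π a f N ε hT hε s (fun j hj => ha j (by omega)) η hη 𝒱
        set F' := Function.update Flow (s+1) 𝒱 with hF'
        have hF'top : F' (s+1) = 𝒱 := Function.update_self _ _ _
        have hF'low : ∀ j, j ≠ s + 1 → F' j = Flow j := fun j hj => Function.update_of_ne hj _ _
        have hcover : ∀ j, j ≤ s + 1 → ⋃₀ ((F' j : Set (Set (X j)))) = Set.univ := by
          have hd : ∀ d j, j + d = s + 1 → ⋃₀ ((F' j : Set (Set (X j)))) = Set.univ := by
            intro d
            induction d with
            | zero =>
              intro j hj
              obtain rfl : j = s + 1 := by omega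
              rw [hF'top]
              exact Set.univ_subset_iff.1 hV2
            | succ d ihd =>
              intro j hj
              have hnext := ihd (j+1) (by omega)
              apply Set.eq_univ_of_univ_subset
              intro x _
              have hx : π j x ∈ ⋃₀ ((F' (j+1) : Set (Set (X (j+1))))) := by
                rw [hnext]; trivial
              obtain ⟨U, hU, hxU⟩ := hx
              by_cases hjs : j = s
              · subst hjs
                rw [hF'top] at hU
                obtain ⟨W, hW, hxW⟩ := (h2 U hU).2.1 hxU
                refine ⟨W, ?_, hxW⟩
                rw [hF'low j (by omega)]
                exact Finset.mem_coe.2 ((h2 U hU).1 hW)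
              · rw [hF'low (j+1) (by omega)] at hU
                obtain ⟨hsub, hcov⟩ := h4 j (by omega) U hU
                obtain ⟨W, hW, hxW⟩ := hcov hxU
                refine ⟨W, ?_, hxW⟩
                rw [hF'low j (by omega)]
                exact Finset.mem_coe.2 (hsub hW)
          intro j hj
          exact hd (s + 1 - j) j (by omega)
        have hchain : IsOpenCoverChain T π (s+2) N ε F' Glow := by
          refine ⟨?_, ?_, ?_, ?_⟩
          · intro i hi V hV
            by_cases his : i = s + 1
            · subst his
              rw [hF'top] at hV
              exact hV1 V hV
            · rw [hF'low i his] at hV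
              exact h1 i (by omega) V hV
          · intro i hi
            exact hcover i (by omega)
          · intro i hi U hU
            by_cases his : i = s
            · subst his
              rw [hF'top] at hU
              refine ⟨?_, (h2 U hU).2.1⟩
              rw [hF'low i (by omega)]
              exact (h2 U hU).1
            · rw [hF'low (i+1) (by omega)] at hU
              obtain ⟨hsub, hcov⟩ := h4 i (by omega) U hU
              refine ⟨?_, hcov⟩
              rw [hF'low i (by omega)]
              exact hsub
          · intro i hi V hV
            by_cases his : i = s
            · subst his
              rw [hF'low i (by omega)] at hV
              obtain ⟨U, hU, hVU⟩ := h3 V hV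
              exact ⟨U, by rw [hF'top]; exact hU, hVU⟩
            · rw [hF'low i (by omega)] at hV
              obtain ⟨U, hU, hVU⟩ := h5 i (by omega) V hV
              exact ⟨U, by rw [hF'low (i+1) (by omega)]; exact hU, hVU⟩
        have hval : chainVal T a f N Glow (s+1) (F' (s+1))
            ≤ paP T π a f (s+1) Set.univ N ε + δ := by
          rw [hF'top, chainVal_succ_def]
          have hcard : ((𝒱.card : ℝ)) ≤ (M:ℝ) := by exact_mod_cast Nat.le_succ _
          have hcardmul : (𝒱.card : ℝ) * (δ/(2*(M:ℝ))) ≤ δ/2 := by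
            calc (𝒱.card : ℝ) * (δ/(2*(M:ℝ))) ≤ (M:ℝ) * (δ/(2*(M:ℝ))) :=
                  mul_le_mul_of_nonneg_right hcard hcpos.le
              _ = δ/2 := by field_simp
          calc ∑ U ∈ 𝒱, (chainVal T a f N Glow s (Glow s U)) ^ (a s)
              ≤ ∑ U ∈ 𝒱, (paP T π a f s (π s ⁻¹' U) N ε + η) ^ (a s) := by
                refine Finset.sum_le_sum fun U hU => ?_
                exact Real.rpow_le_rpow (chainVal_nonneg T a f N Glow s _)
                  (h2 U hU).2.2 (ha s (by omega)).1
            _ ≤ ∑ U ∈ 𝒱, ((paP T π a f s (π s ⁻¹' U) N ε) ^ (a s) + δ/(2*(M:ℝ))) :=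
                Finset.sum_le_sum fun U hU => hηs _ (paP_nonneg T π a f N ε s _)
            _ = (∑ U ∈ 𝒱, (paP T π a f s (π s ⁻¹' U) N ε) ^ (a s))
                  + (𝒱.card : ℝ) * (δ/(2*(M:ℝ))) := by
                rw [Finset.sum_add_distrib, Finset.sum_const, nsmul_eq_mul]
            _ ≤ (paP T π a f (s+1) Set.univ N ε + δ/2) + δ/2 := add_le_add hV3' hcardmul
            _ = paP T π a f (s+1) Set.univ N ε + δ := by ring
        have hmem : chainVal T a f N Glow (s+2-1) (F' (s+2-1)) ∈ Cs := by
          rw [hCs]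
          exact ⟨F', Glow, hchain, rfl⟩
        exact le_trans (csInf_le hCb hmem) hval
    by_contra hlt
    push_neg at hlt
    have h := key ((sInf Cs - paP T π a f (r-1) Set.univ N ε)/2) (by linarith)
    linarith

end WTPaper
end
end

section
/- Let π : (X_1, T_1) → (X_2, T_2) and φ : (Y, S) → (X_2, T_2) be factor maps between dynamical systems, and let ψ : (X_1 ×_{X_2} Y, T_1 × S) → (X_1, T_1), ψ(x,y) = x, be the projection from the fiber product. If φ is a principal extension, then ψ is a principal extension, i.e., h_top(X_1 ×_{X_2} Y, T_1 × S | X_1, T_1) = 0. -/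
open Set MeasureTheory Filter Topology
open scoped ENNReal NNReal

noncomputable section

namespace WTPaper

/-- The minimal cardinality `#(A, N, ε)` of an open cover of `A` by sets of
`d_N`-diameter `< ε`. -/
def covNum {Z : Type*} [MetricSpace Z] (S : Z → Z) (A : Set Z) (N : ℕ) (ε : ℝ) : ℕ :=
  sInf { n : ℕ | ∃ U : Fin n → Set Z,
    (∀ j, IsOpen (U j)) ∧ (A ⊆ ⋃ j, U j) ∧
    (∀ j, dynDiam S N (U j) < ENNReal.ofReal ε) }

/-- The conditional topological entropy of a factor map `π : (Z, S) → (W, T)`: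
`h_top(Z, S | W, T) = lim_{ε → 0} lim_{N → ∞} (1/N) sup_{w ∈ W} log #(π⁻¹(w), N, ε)`.
(The limit over `N` is the infimum over `N ≥ 1` by subadditivity, and the limit as `ε → 0`
of the nondecreasing quantity is the supremum over `ε > 0`.) -/
def condTopEntropy {Z W : Type*} [MetricSpace Z] (S : Z → Z) (π : Z → W) : EReal :=
  ⨆ ε : {e : ℝ // 0 < e}, ⨅ N : {n : ℕ // 0 < n},
    ((((N : ℕ) : ℝ)⁻¹ * ⨆ w : W, Real.log (covNum S (π ⁻¹' {w}) (N : ℕ) (ε : ℝ)) : ℝ) : EReal)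


section Aux
variable {Z : Type*} [MetricSpace Z]

lemma dynDiam_le_of_forall {S : Z → Z} {N : ℕ} {U : Set Z} {c : ℝ≥0∞}
    (h : ∀ u ∈ U, ∀ v ∈ U, ∀ n < N, edist (S^[n] u) (S^[n] v) ≤ c) :
    dynDiam S N U ≤ c := by
  refine iSup₂_le fun u hu => iSup₂_le fun v hv => ?_
  exact Finset.sup_le fun n hn => h u hu v hv n (Finset.mem_range.mp hn)

/-- Open dynamical "ball" of radius `ε/3` in the Bowen metric `d_N`. -/
def dynB (S : Z → Z) (N : ℕ) (ε : ℝ) (x : Z) : Set Z :=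
  ⋂ n ∈ Finset.range N, S^[n] ⁻¹' Metric.eball (S^[n] x) (ENNReal.ofReal (ε/3))

lemma isOpen_dynB {S : Z → Z} (hS : Continuous S) (N : ℕ) (ε : ℝ) (x : Z) :
    IsOpen (dynB S N ε x) :=
  isOpen_biInter_finset fun n _ => EMetric.isOpen_ball.preimage (hS.iterate n)

lemma mem_dynB {S : Z → Z} (N : ℕ) {ε : ℝ} (hε : 0 < ε) (x : Z) : x ∈ dynB S N ε x := by
  refine Set.mem_iInter₂.mpr fun n _ => ?_
  simpa [EMetric.mem_ball] using ENNReal.ofReal_pos.mpr (by linarith : (0:ℝ) < ε/3)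

lemma edist_of_mem_dynB {S : Z → Z} {N : ℕ} {ε : ℝ} (hε : 0 < ε) {x u v : Z}
    (hu : u ∈ dynB S N ε x) (hv : v ∈ dynB S N ε x) {n : ℕ} (hn : n < N) :
    edist (S^[n] u) (S^[n] v) ≤ ENNReal.ofReal (2*(ε/3)) := by
  have hu' := Set.mem_iInter₂.mp hu n (Finset.mem_range.mpr hn)
  have hv' := Set.mem_iInter₂.mp hv n (Finset.mem_range.mpr hn)
  rw [Set.mem_preimage, EMetric.mem_ball] at hu' hv'
  calc edist (S^[n] u) (S^[n] v)
      ≤ edist (S^[n] u) (S^[n] x) + edist (S^[n] x) (S^[n] v) := edist_triangle _ _ _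
    _ ≤ ENNReal.ofReal (ε/3) + ENNReal.ofReal (ε/3) := by
        exact add_le_add hu'.le (by rw [edist_comm]; exact hv'.le)
    _ = ENNReal.ofReal (2*(ε/3)) := by
        rw [← ENNReal.ofReal_add (by linarith) (by linarith)]; ring_nf

lemma exists_dyn_cover [CompactSpace Z] {S : Z → Z} (hS : Continuous S) (N : ℕ) {ε : ℝ}
    (hε : 0 < ε) :
    ∃ (n : ℕ) (U : Fin n → Set Z), (∀ j, IsOpen (U j)) ∧ (Set.univ ⊆ ⋃ j, U j) ∧
      (∀ j, dynDiam S N (U j) < ENNReal.ofReal ε) := by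
  have hcov : (Set.univ : Set Z) ⊆ ⋃ x : Z, dynB S N ε x :=
    fun x _ => Set.mem_iUnion.mpr ⟨x, mem_dynB N hε x⟩
  obtain ⟨t, ht⟩ := isCompact_univ.elim_finite_subcover (dynB S N ε)
    (fun x => isOpen_dynB hS N ε x) hcov
  refine ⟨t.card, fun j => dynB S N ε (t.equivFin.symm j),
    fun j => isOpen_dynB hS N ε _, ?_, fun j => ?_⟩
  · intro x hx
    obtain ⟨y, hy, hxy⟩ := Set.mem_iUnion₂.mp (ht hx)
    exact Set.mem_iUnion.mpr ⟨t.equivFin ⟨y, hy⟩, by simpa using hxy⟩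
  · refine lt_of_le_of_lt
      (dynDiam_le_of_forall fun u hu v hv n hn => edist_of_mem_dynB hε hu hv hn) ?_
    exact (ENNReal.ofReal_lt_ofReal_iff hε).mpr (by linarith)

lemma covNum_bdd [CompactSpace Z] {S : Z → Z} (hS : Continuous S) (N : ℕ)
    {ε : ℝ} (hε : 0 < ε) : ∃ m : ℕ, ∀ B : Set Z, covNum S B N ε ≤ m := by
  obtain ⟨n, U, h1, h2, h3⟩ := exists_dyn_cover hS N hε
  exact ⟨n, fun B => Nat.sInf_le ⟨U, h1, (Set.subset_univ B).trans h2, h3⟩⟩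

lemma log_nat_mono {a b : ℕ} (h : a ≤ b) : Real.log a ≤ Real.log b := by
  rcases Nat.eq_zero_or_pos a with ha | ha
  · simpa [ha] using Real.log_natCast_nonneg b
  · exact Real.log_le_log (by exact_mod_cast ha) (by exact_mod_cast h)

end Aux

/-- **Lemma 3.5**: if `φ : (Y, S) → (X₂, T₂)` is a principal extension, then the projection
`ψ : (X₁ ×_{X₂} Y, T₁ × S) → (X₁, T₁)` from the fiber product is also a principal
extension. -/
theorem fiberProduct_principal_of_principal
    (X₁ X₂ Y : Type*) [MetricSpace X₁] [MetricSpace X₂] [MetricSpace Y]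
    [CompactSpace X₁] [CompactSpace X₂] [CompactSpace Y]
    (T₁ : X₁ → X₁) (T₂ : X₂ → X₂) (S : Y → Y)
    (hT₁ : Continuous T₁) (hT₂ : Continuous T₂) (hS : Continuous S)
    (π : X₁ → X₂) (hπcont : Continuous π) (hπsurj : Function.Surjective π)
    (hπfact : π ∘ T₁ = T₂ ∘ π)
    (φ : Y → X₂) (hφcont : Continuous φ) (hφsurj : Function.Surjective φ)
    (hφfact : φ ∘ S = T₂ ∘ φ)
    (hφprincipal : condTopEntropy S φ = 0)
    (TS : {p : X₁ × Y // π p.1 = φ p.2} → {p : X₁ × Y // π p.1 = φ p.2})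
    (hTS : ∀ p : {p : X₁ × Y // π p.1 = φ p.2},
      ((TS p : X₁ × Y)) = (T₁ (p : X₁ × Y).1, S (p : X₁ × Y).2)) :
    condTopEntropy TS (fun p : {p : X₁ × Y // π p.1 = φ p.2} => (p : X₁ × Y).1) = 0 := by
  classical
  have hiter : ∀ (n : ℕ) (p : {p : X₁ × Y // π p.1 = φ p.2}),
      ((TS^[n] p : X₁ × Y)) = (T₁^[n] (p : X₁ × Y).1, S^[n] (p : X₁ × Y).2) := by
    intro n
    induction n with
    | zero => intro p; simp
    | succ n ih =>
      intro p
      rw [Function.iterate_succ_apply', hTS (TS^[n] p), ih p,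
        Function.iterate_succ_apply', Function.iterate_succ_apply']
  have key : ∀ (x : X₁) (N : ℕ) (ε : ℝ), 0 < ε →
      covNum TS ((fun p : {p : X₁ × Y // π p.1 = φ p.2} => (p : X₁ × Y).1) ⁻¹' {x}) N ε ≤
        covNum S (φ ⁻¹' {π x}) N ε := by
    intro x N ε hε
    have hne : { n : ℕ | ∃ U : Fin n → Set Y, (∀ j, IsOpen (U j)) ∧
        (φ ⁻¹' {π x} ⊆ ⋃ j, U j) ∧
        (∀ j, dynDiam S N (U j) < ENNReal.ofReal ε) }.Nonempty := by
      obtain ⟨n, U, h1, h2, h3⟩ := exists_dyn_cover hS N hε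
      exact ⟨n, U, h1, (Set.subset_univ _).trans h2, h3⟩
    have hmem : ∃ U : Fin (covNum S (φ ⁻¹' {π x}) N ε) → Set Y,
        (∀ j, IsOpen (U j)) ∧ (φ ⁻¹' {π x} ⊆ ⋃ j, U j) ∧
        (∀ j, dynDiam S N (U j) < ENNReal.ofReal ε) := Nat.sInf_mem hne
    obtain ⟨U, hUo, hUc, hUd⟩ := hmem
    refine Nat.sInf_le ⟨fun j => {p : {p : X₁ × Y // π p.1 = φ p.2} |
        (p : X₁ × Y).1 ∈ dynB T₁ N ε x ∧ (p : X₁ × Y).2 ∈ U j}, ?_, ?_, ?_⟩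
    · intro j
      exact ((isOpen_dynB hT₁ N ε x).preimage
          (continuous_fst.comp continuous_subtype_val)).inter
        ((hUo j).preimage (continuous_snd.comp continuous_subtype_val))
    · rintro p hp
      have hp1 : (p : X₁ × Y).1 = x := hp
      have hp2 : (p : X₁ × Y).2 ∈ φ ⁻¹' {π x} := by
        simp only [Set.mem_preimage, Set.mem_singleton_iff]
        rw [← p.2, hp1]
      obtain ⟨j, hj⟩ := Set.mem_iUnion.mp (hUc hp2)
      refine Set.mem_iUnion.mpr ⟨j, ⟨?_, hj⟩⟩
      rw [hp1]; exact mem_dynB N hε x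
    · intro j
      refine lt_of_le_of_lt (dynDiam_le_of_forall fun p hp q hq n hn => ?_)
        (sup_lt_iff.mpr ⟨(ENNReal.ofReal_lt_ofReal_iff hε).mpr
          (by linarith : 2*(ε/3) < ε), hUd j⟩)
      rw [Subtype.edist_eq, hiter n p, hiter n q, Prod.edist_eq]
      refine sup_le_sup (edist_of_mem_dynB hε hp.1 hq.1 hn) ?_
      have h2 : edist (S^[n] (p : X₁ × Y).2) (S^[n] (q : X₁ × Y).2) ≤
          dynEDist S N (p : X₁ × Y).2 (q : X₁ × Y).2 :=
        Finset.le_sup (f := fun n => edist (S^[n] (p : X₁ × Y).2) (S^[n] (q : X₁ × Y).2))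
          (Finset.mem_range.mpr hn)
      exact h2.trans (le_iSup₂_of_le ((p : X₁ × Y).2) hp.2
        (le_iSup₂_of_le ((q : X₁ × Y).2) hq.2 le_rfl))
  have hle : condTopEntropy TS (fun p : {p : X₁ × Y // π p.1 = φ p.2} => (p : X₁ × Y).1)
      ≤ condTopEntropy S φ := by
    refine iSup_mono fun ε => iInf_mono fun N => ?_
    refine EReal.coe_le_coe_iff.mpr ?_
    refine mul_le_mul_of_nonneg_left ?_ (inv_nonneg.mpr (Nat.cast_nonneg _))
    obtain ⟨m, hmY⟩ := covNum_bdd hS (N : ℕ) ε.2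
    have hbdd : BddAbove (Set.range fun w : X₂ =>
        Real.log (covNum S (φ ⁻¹' {w}) (N : ℕ) (ε : ℝ))) := by
      refine ⟨Real.log m, ?_⟩
      rintro _ ⟨w, rfl⟩
      exact log_nat_mono (hmY _)
    rcases isEmpty_or_nonempty X₁ with h | h
    · rw [Real.iSup_of_isEmpty]
      exact Real.iSup_nonneg fun w => Real.log_natCast_nonneg _
    · exact ciSup_le fun x =>
        (log_nat_mono (key x (N : ℕ) (ε : ℝ) ε.2)).trans (le_ciSup hbdd (π x))
  have hge : (0 : EReal) ≤
      condTopEntropy TS (fun p : {p : X₁ × Y // π p.1 = φ p.2} => (p : X₁ × Y).1) := by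
    refine le_iSup_of_le ⟨1, one_pos⟩ (le_iInf fun N => ?_)
    refine EReal.coe_nonneg.mpr ?_
    exact mul_nonneg (inv_nonneg.mpr (Nat.cast_nonneg _))
      (Real.iSup_nonneg fun x => Real.log_natCast_nonneg _)
  exact le_antisymm (hle.trans_eq hφprincipal) hge


end WTPaper
end
end

section
/- Let (X,T) be a dynamical system, σ a Borel probability measure on X (not necessarily T-invariant), and A a finite Borel partition of X with |A| elements. For N ∈ ℕ set μ_N = (1/N) Σ_{k=0}^{N−1} (T^k)_* σ. Then for all natural numbers N and M, (1/M) H_{μ_N}(A_M) ≥ (1/N) H_σ(A_N) − (2M log|A|)/N. -/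
open Set MeasureTheory Filter Topology
open scoped ENNReal NNReal

noncomputable section

namespace WTAux

open Real MeasureTheory Set


lemma gibbs_pt {p q : ℝ} (hp : 0 ≤ p) (hq : 0 ≤ q) (h : p ≠ 0 → q ≠ 0) :
    p * Real.log q - p * Real.log p ≤ q - p := by
  rcases eq_or_lt_of_le hp with hp0 | hp0
  · simp [← hp0, hq]
  · have hq0 : 0 < q := lt_of_le_of_ne hq (Ne.symm (h hp0.ne'))
    have h1 : Real.log (q / p) ≤ q / p - 1 := Real.log_le_sub_one_of_pos (by positivity)
    have h2 : Real.log (q / p) = Real.log q - Real.log p := Real.log_div hq0.ne' hp0.ne'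
    calc p * Real.log q - p * Real.log p = p * Real.log (q / p) := by rw [h2]; ring
      _ ≤ p * (q / p - 1) := by nlinarith
      _ = q - p := by field_simp

/-- Gibbs: entropy of a probability vector is at most `log card`. -/
lemma sum_negMulLog_le_log_card {ι : Type*} [Fintype ι] (x : ι → ℝ)
    (h0 : ∀ i, 0 ≤ x i) (h1 : ∑ i, x i = 1) :
    ∑ i, Real.negMulLog (x i) ≤ Real.log (Fintype.card ι) := by
  have hne : Nonempty ι := by
    by_contra h
    rw [not_nonempty_iff] at h
    simp [Finset.univ_eq_empty] at h1
  have hcard : (0:ℝ) < (Fintype.card ι : ℝ) := by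
    exact_mod_cast Fintype.card_pos
  have hpt : ∀ i, Real.negMulLog (x i) ≤
      ((Fintype.card ι : ℝ))⁻¹ - x i + x i * Real.log (Fintype.card ι) := by
    intro i
    have := gibbs_pt (p := x i) (q := ((Fintype.card ι : ℝ))⁻¹) (h0 i)
      (by positivity) (fun _ => by positivity)
    rw [Real.log_inv] at this
    simp only [Real.negMulLog, neg_mul]
    nlinarith
  calc ∑ i, Real.negMulLog (x i)
      ≤ ∑ i, (((Fintype.card ι : ℝ))⁻¹ - x i + x i * Real.log (Fintype.card ι)) :=
        Finset.sum_le_sum fun i _ => hpt i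
    _ = (Fintype.card ι : ℝ) * ((Fintype.card ι : ℝ))⁻¹ - 1 + Real.log (Fintype.card ι) := by
        rw [Finset.sum_add_distrib, Finset.sum_sub_distrib, ← Finset.sum_mul, h1]
        simp [Finset.sum_const, Finset.card_univ]
    _ = Real.log (Fintype.card ι) := by
        rw [mul_inv_cancel₀ hcard.ne']; ring

/-- Concavity of `negMulLog` for uniform averages. -/
lemma sum_negMulLog_le_card_mul (N : ℕ) (hN : 0 < N) (x : ℕ → ℝ) (h0 : ∀ k, 0 ≤ x k) :
    ∑ k ∈ Finset.range N, Real.negMulLog (x k)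
      ≤ (N : ℝ) * Real.negMulLog (((N : ℝ))⁻¹ * ∑ k ∈ Finset.range N, x k) := by
  have hN' : (0:ℝ) < (N:ℝ) := by exact_mod_cast hN
  have H := Real.concaveOn_negMulLog.le_map_sum (t := Finset.range N)
    (w := fun _ => ((N:ℝ))⁻¹) (p := x)
    (fun i _ => by positivity)
    (by simp [Finset.sum_const, mul_inv_cancel₀ hN'.ne'])
    (fun i _ => h0 i)
  simp only [smul_eq_mul] at H
  have h1 : ∑ i ∈ Finset.range N, ((N:ℝ))⁻¹ * x i = ((N:ℝ))⁻¹ * ∑ i ∈ Finset.range N, x i := by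
    rw [Finset.mul_sum]
  rw [h1] at H
  have h2 : ∑ i ∈ Finset.range N, ((N:ℝ))⁻¹ * Real.negMulLog (x i)
      = ((N:ℝ))⁻¹ * ∑ i ∈ Finset.range N, Real.negMulLog (x i) := by rw [Finset.mul_sum]
  rw [h2] at H
  calc ∑ k ∈ Finset.range N, Real.negMulLog (x k)
      = (N:ℝ) * (((N:ℝ))⁻¹ * ∑ k ∈ Finset.range N, Real.negMulLog (x k)) := by
        field_simp
    _ ≤ (N:ℝ) * Real.negMulLog (((N:ℝ))⁻¹ * ∑ k ∈ Finset.range N, x k) := by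
        exact mul_le_mul_of_nonneg_left H hN'.le



variable {X : Type*} [MeasurableSpace X]

/-- A finite measurable partition given as an indexed family. -/
def IsPartFam {ι : Type*} (p : ι → Set X) : Prop :=
  (∀ i, MeasurableSet (p i)) ∧ (Pairwise fun i j => p i ∩ p j = ∅) ∧ (⋃ i, p i) = Set.univ

lemma IsPartFam.pairwise_disjoint {ι : Type*} {p : ι → Set X} (hp : IsPartFam p) :
    Pairwise (Function.onFun Disjoint p) := by
  intro i j hij
  exact Set.disjoint_iff_inter_eq_empty.2 (hp.2.1 hij)

lemma IsPartFam.sum_eq {ι : Type*} [Fintype ι] {p : ι → Set X} (hp : IsPartFam p)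
    (μ : Measure X) [IsProbabilityMeasure μ] {S : Set X} (hS : MeasurableSet S) :
    ∑ i, (μ (S ∩ p i)).toReal = (μ S).toReal := by
  have h1 : S = ⋃ i, S ∩ p i := by
    rw [← Set.inter_iUnion, hp.2.2, Set.inter_univ]
  have h2 : μ S = ∑ i, μ (S ∩ p i) := by
    conv_lhs => rw [h1]
    rw [measure_iUnion (fun i j hij => Set.disjoint_iff_inter_eq_empty.2 (by
        have hsub : S ∩ p i ∩ (S ∩ p j) ⊆ p i ∩ p j := fun x hx => ⟨hx.1.2, hx.2.2⟩
        rw [hp.2.1 hij] at hsub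
        exact Set.subset_empty_iff.1 hsub))
      (fun i => hS.inter (hp.1 i))]
    exact tsum_fintype _
  rw [h2, ENNReal.toReal_sum (fun i _ => measure_ne_top μ _)]

lemma IsPartFam.sum_one {ι : Type*} [Fintype ι] {p : ι → Set X} (hp : IsPartFam p)
    (μ : Measure X) [IsProbabilityMeasure μ] :
    ∑ i, (μ (p i)).toReal = 1 := by
  have := hp.sum_eq μ MeasurableSet.univ
  simpa [measure_univ] using this

/-- Subadditivity of Shannon entropy under joins. -/
lemma subadd {ι κ : Type*} [Fintype ι] [Fintype κ] {p : ι → Set X} {q : κ → Set X}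
    (hp : IsPartFam p) (hq : IsPartFam q) (μ : Measure X) [IsProbabilityMeasure μ] :
    ∑ i, ∑ k, Real.negMulLog (μ (p i ∩ q k)).toReal
      ≤ ∑ i, Real.negMulLog (μ (p i)).toReal + ∑ k, Real.negMulLog (μ (q k)).toReal := by
  set a : ι → ℝ := fun i => (μ (p i)).toReal with ha
  set b : κ → ℝ := fun k => (μ (q k)).toReal with hb
  set m : ι → κ → ℝ := fun i k => (μ (p i ∩ q k)).toReal with hm
  have hrow : ∀ i, ∑ k, m i k = a i := fun i => hq.sum_eq μ (hp.1 i)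
  have hcol : ∀ k, ∑ i, m i k = b k := by
    intro k
    have := hp.sum_eq μ (hq.1 k) (S := q k)
    simpa [hm, Set.inter_comm] using this
  have ha1 : ∑ i, a i = 1 := hp.sum_one μ
  have hb1 : ∑ k, b k = 1 := hq.sum_one μ
  have hm0 : ∀ i k, 0 ≤ m i k := fun i k => ENNReal.toReal_nonneg
  have ha0 : ∀ i, 0 ≤ a i := fun i => ENNReal.toReal_nonneg
  have hb0 : ∀ k, 0 ≤ b k := fun k => ENNReal.toReal_nonneg
  have hma : ∀ i k, m i k ≤ a i := fun i k =>
    ENNReal.toReal_mono (measure_ne_top μ _) (measure_mono Set.inter_subset_left)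
  have hmb : ∀ i k, m i k ≤ b k := fun i k =>
    ENNReal.toReal_mono (measure_ne_top μ _) (measure_mono Set.inter_subset_right)
  -- pointwise Gibbs bound
  have hpt : ∀ i k, Real.negMulLog (m i k) + m i k * Real.log (a i) + m i k * Real.log (b k)
      ≤ a i * b k - m i k := by
    intro i k
    rcases eq_or_lt_of_le (hm0 i k) with h0 | h0
    · simp only [← h0, Real.negMulLog_zero, zero_mul, add_zero, sub_zero]
      positivity
    · have hai : 0 < a i := lt_of_lt_of_le h0 (hma i k)
      have hbk : 0 < b k := lt_of_lt_of_le h0 (hmb i k)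
      have := gibbs_pt (p := m i k) (q := a i * b k) (hm0 i k) (by positivity)
        (fun _ => by positivity)
      rw [Real.log_mul hai.ne' hbk.ne'] at this
      simp only [Real.negMulLog, neg_mul]
      nlinarith
  have hsum : ∑ i, ∑ k, (Real.negMulLog (m i k) + m i k * Real.log (a i)
      + m i k * Real.log (b k)) ≤ 0 := by
    calc ∑ i, ∑ k, (Real.negMulLog (m i k) + m i k * Real.log (a i) + m i k * Real.log (b k))
        ≤ ∑ i, ∑ k, (a i * b k - m i k) :=
          Finset.sum_le_sum fun i _ => Finset.sum_le_sum fun k _ => hpt i k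
      _ = (∑ i, a i) * (∑ k, b k) - ∑ i, ∑ k, m i k := by
          rw [Finset.sum_mul_sum]
          rw [← Finset.sum_sub_distrib]
          congr 1
          ext i
          rw [← Finset.sum_sub_distrib]
      _ = 0 := by
          have : ∑ i, ∑ k, m i k = 1 := by
            rw [Finset.sum_congr rfl fun i _ => hrow i, ha1]
          rw [ha1, hb1, this]; ring
  have hA : ∑ i, ∑ k, m i k * Real.log (a i) = ∑ i, a i * Real.log (a i) := by
    refine Finset.sum_congr rfl fun i _ => ?_
    rw [← Finset.sum_mul, hrow i]
  have hB : ∑ i, ∑ k, m i k * Real.log (b k) = ∑ k, b k * Real.log (b k) := by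
    rw [Finset.sum_comm]
    refine Finset.sum_congr rfl fun k _ => ?_
    rw [← Finset.sum_mul, hcol k]
  have expand : ∑ i, ∑ k, (Real.negMulLog (m i k) + m i k * Real.log (a i)
      + m i k * Real.log (b k))
      = (∑ i, ∑ k, Real.negMulLog (m i k)) + (∑ i, a i * Real.log (a i))
        + (∑ k, b k * Real.log (b k)) := by
    rw [← hA, ← hB]
    simp [Finset.sum_add_distrib]
  rw [expand] at hsum
  have hnA : ∑ i, Real.negMulLog (a i) = -∑ i, a i * Real.log (a i) := by
    simp [Real.negMulLog, Finset.sum_neg_distrib, neg_mul]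
  have hnB : ∑ k, Real.negMulLog (b k) = -∑ k, b k * Real.log (b k) := by
    simp [Real.negMulLog, Finset.sum_neg_distrib, neg_mul]
  rw [hnA, hnB]
  linarith


section Dyn

variable {X : Type*} [MeasurableSpace X] (T : X → X) (A : Finset (Set X))

/-- The cell of the refined partition indexed by an itinerary `c`. -/
def cell (n : ℕ) (c : Fin n → ↥A) : Set X :=
  ⋂ k : Fin n, T^[(k : ℕ)] ⁻¹' ((c k : Set X))

/-- Entropy of the `n`-step refinement, as a sum over itineraries. -/
noncomputable def entn (μ : MeasureTheory.Measure X) (n : ℕ) : ℝ :=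
  ∑ c : Fin n → ↥A, Real.negMulLog ((μ (cell T A n c)).toReal)

variable {T A}
variable (hTm : Measurable T) (hAm : ∀ S ∈ A, MeasurableSet S)
  (hAd : ∀ S ∈ A, ∀ S' ∈ A, S ≠ S' → S ∩ S' = ∅) (hAc : ⋃₀ (A : Set (Set X)) = Set.univ)

include hAd in
lemma cell_disj {n : ℕ} {c c' : Fin n → ↥A} (h : c ≠ c') :
    cell T A n c ∩ cell T A n c' = ∅ := by
  obtain ⟨k, hk⟩ := Function.ne_iff.1 h
  have hkset : (c k : Set X) ≠ (c' k : Set X) := fun hh => hk (Subtype.ext hh)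
  have hdisj : (c k : Set X) ∩ (c' k : Set X) = ∅ := hAd _ (c k).2 _ (c' k).2 hkset
  have hsub : cell T A n c ∩ cell T A n c' ⊆
      T^[(k : ℕ)] ⁻¹' ((c k : Set X) ∩ (c' k : Set X)) := by
    intro x hx
    exact ⟨Set.mem_iInter.1 hx.1 k, Set.mem_iInter.1 hx.2 k⟩
  rw [hdisj] at hsub
  simpa using Set.subset_empty_iff.1 hsub

include hTm hAm hAd hAc in
lemma cell_partFam (n : ℕ) : IsPartFam (cell T A n) := by
  refine ⟨fun c => MeasurableSet.iInter fun k => (hTm.iterate _) ((hAm _ (c k).2)),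
    fun c c' h => cell_disj hAd h, ?_⟩
  rw [Set.eq_univ_iff_forall]
  intro x
  have : ∀ k : Fin n, ∃ S : ↥A, T^[(k : ℕ)] x ∈ (S : Set X) := by
    intro k
    have hx : T^[(k : ℕ)] x ∈ ⋃₀ (A : Set (Set X)) := hAc ▸ Set.mem_univ _
    obtain ⟨S, hS, hxS⟩ := hx
    exact ⟨⟨S, hS⟩, hxS⟩
  choose c hc using this
  exact Set.mem_iUnion.2 ⟨c, Set.mem_iInter.2 hc⟩

/-- Summing a function vanishing on `∅` over the image of a pairwise-disjoint family. -/
lemma sum_image_of_disjoint {ι : Type*} [Fintype ι] (f : ι → Set X) (g : Set X → ℝ)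
    (hg : g ∅ = 0) (hf : ∀ c c', c ≠ c' → f c ∩ f c' = ∅) :
    ∑ S ∈ (letI := Classical.decEq (Set X); Finset.image f Finset.univ), g S
      = ∑ c, g (f c) := by
  classical
  set s₀ : Finset ι := Finset.univ.filter (fun c => f c ≠ ∅) with hs₀
  have hinj : Set.InjOn f s₀ := by
    intro c hc c' hc' hfe
    by_contra hne
    have := hf c c' hne
    rw [hfe, Set.inter_self] at this
    exact (Finset.mem_filter.1 hc').2 this
  have h1 : ∑ S ∈ Finset.image f Finset.univ, g S = ∑ S ∈ Finset.image f s₀, g S := by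
    refine (Finset.sum_subset (Finset.image_subset_image (Finset.subset_univ _)) ?_).symm
    intro S hS hS'
    obtain ⟨c, _, rfl⟩ := Finset.mem_image.1 hS
    have : f c = ∅ := by
      by_contra hne
      exact hS' (Finset.mem_image.2 ⟨c, Finset.mem_filter.2 ⟨Finset.mem_univ _, hne⟩, rfl⟩)
    rw [this, hg]
  have h2 : ∑ S ∈ Finset.image f s₀, g S = ∑ c ∈ s₀, g (f c) := Finset.sum_image
    (fun c hc c' hc' h => hinj hc hc' h)
  have h3 : ∑ c ∈ s₀, g (f c) = ∑ c, g (f c) := by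
    refine Finset.sum_subset (Finset.subset_univ _) ?_
    intro c _ hc
    have : f c = ∅ := by
      by_contra hne
      exact hc (Finset.mem_filter.2 ⟨Finset.mem_univ _, hne⟩)
    rw [this, hg]
  convert h1.trans (h2.trans h3)

end Dyn

section Dyn2

variable {X : Type*} [MeasurableSpace X] {T : X → X} {A : Finset (Set X)}
variable (hTm : Measurable T) (hAm : ∀ S ∈ A, MeasurableSet S)
  (hAd : ∀ S ∈ A, ∀ S' ∈ A, S ≠ S' → S ∩ S' = ∅) (hAc : ⋃₀ (A : Set (Set X)) = Set.univ)

set_option linter.unusedSectionVars false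

/-- `entn` is nonnegative. -/
lemma entn_nonneg (μ : MeasureTheory.Measure X) [MeasureTheory.IsProbabilityMeasure μ] (n : ℕ) :
    0 ≤ entn T A μ n := by
  refine Finset.sum_nonneg fun c _ => Real.negMulLog_nonneg ENNReal.toReal_nonneg ?_
  exact ENNReal.toReal_le_of_le_ofReal zero_le_one (by simpa using MeasureTheory.prob_le_one)

lemma entn_zero (μ : MeasureTheory.Measure X) [MeasureTheory.IsProbabilityMeasure μ] :
    entn T A μ 0 = 0 := by
  rw [entn]
  refine Finset.sum_eq_zero fun c _ => ?_
  have hc : cell T A 0 c = Set.univ := by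
    rw [cell]; exact Set.iInter_of_empty _
  rw [hc]
  simp

include hTm hAm hAd hAc in
/-- `entn ≤ n log |A|`. -/
lemma entn_le (μ : MeasureTheory.Measure X) [MeasureTheory.IsProbabilityMeasure μ] (n : ℕ) :
    entn T A μ n ≤ (n : ℝ) * Real.log (A.card : ℝ) := by
  have h1 := sum_negMulLog_le_log_card (fun c : Fin n → ↥A => (μ (cell T A n c)).toReal)
    (fun c => ENNReal.toReal_nonneg) ((cell_partFam hTm hAm hAd hAc n).sum_one μ)
  have hcard : (Fintype.card (Fin n → ↥A) : ℝ) = ((A.card : ℝ)) ^ n := by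
    rw [Fintype.card_fun]
    simp
  rw [entn]
  calc ∑ c : Fin n → ↥A, Real.negMulLog ((μ (cell T A n c)).toReal)
      ≤ Real.log (Fintype.card (Fin n → ↥A)) := h1
    _ = (n : ℝ) * Real.log (A.card : ℝ) := by
        rw [hcard, Real.log_pow]

end Dyn2

section Dyn3

variable {X : Type*} [MeasurableSpace X] {T : X → X} {A : Finset (Set X)}
variable (hTm : Measurable T) (hAm : ∀ S ∈ A, MeasurableSet S)
  (hAd : ∀ S ∈ A, ∀ S' ∈ A, S ≠ S' → S ∩ S' = ∅) (hAc : ⋃₀ (A : Set (Set X)) = Set.univ)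

set_option linter.unusedSectionVars false

lemma cell_split (m n : ℕ) (c : Fin (m + n) → ↥A) :
    cell T A (m + n) c
      = cell T A m (fun i => c (Fin.castAdd n i))
        ∩ T^[m] ⁻¹' cell T A n (fun j => c (Fin.natAdd m j)) := by
  ext x
  simp only [cell, Set.mem_iInter, Set.mem_inter_iff, Set.mem_preimage]
  constructor
  · intro h
    refine ⟨fun i => ?_, fun j => ?_⟩
    · have := h (Fin.castAdd n i)
      simpa using this
    · have := h (Fin.natAdd m j)
      simp only [Fin.coe_natAdd] at this
      rwa [add_comm m (j : ℕ), Function.iterate_add_apply] at this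
  · rintro ⟨h1, h2⟩ k
    rcases lt_or_ge (k : ℕ) m with hk | hk
    · have := h1 ⟨(k : ℕ), hk⟩
      have hkk : Fin.castAdd n ⟨(k : ℕ), hk⟩ = k := by
        apply Fin.ext; simp
      rwa [hkk] at this
    · have hkn : (k : ℕ) - m < n := by
        have := k.2; omega
      have := h2 ⟨(k : ℕ) - m, hkn⟩
      have hkk : Fin.natAdd m ⟨(k : ℕ) - m, hkn⟩ = k := by
        apply Fin.ext; simp; omega
      rw [← Function.iterate_add_apply] at this
      have harith : (k : ℕ) - m + m = (k : ℕ) := by omega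
      rw [harith] at this
      rwa [hkk] at this

include hTm hAm hAd hAc in
/-- Key subadditivity: `H_μ(A_{m+n}) ≤ H_μ(A_m) + H_{(T^m)_*μ}(A_n)`. -/
lemma entn_split (μ : MeasureTheory.Measure X) [MeasureTheory.IsProbabilityMeasure μ]
    (m n : ℕ) :
    entn T A μ (m + n) ≤ entn T A μ m + entn T A (μ.map T^[m]) n := by
  classical
  have hpf : ∀ k : ℕ, IsPartFam (cell T A k) := cell_partFam hTm hAm hAd hAc
  have hqf : IsPartFam (fun c : Fin n → ↥A => T^[m] ⁻¹' cell T A n c) := by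
    refine ⟨fun c => (hTm.iterate m) ((hpf n).1 c), fun c c' h => ?_, ?_⟩
    · simp only
      rw [← Set.preimage_inter, (hpf n).2.1 h, Set.preimage_empty]
    · simp only
      rw [← Set.preimage_iUnion, (hpf n).2.2, Set.preimage_univ]
  set b : (Fin (m + n) → ↥A) → (Fin m → ↥A) × (Fin n → ↥A) :=
    fun c => (fun i => c (Fin.castAdd n i), fun j => c (Fin.natAdd m j)) with hb
  have hbij : Function.Bijective b := by
    rw [Fintype.bijective_iff_injective_and_card]
    constructor
    · intro c c' h
      funext k
      rcases lt_or_ge (k : ℕ) m with hk | hk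
      · have h' := congrFun (congrArg Prod.fst h) ⟨(k : ℕ), hk⟩
        simp only [hb] at h'
        have hkk : Fin.castAdd n ⟨(k : ℕ), hk⟩ = k := Fin.ext (by simp)
        rwa [hkk] at h'
      · have hkn : (k : ℕ) - m < n := by have := k.2; omega
        have h' := congrFun (congrArg Prod.snd h) ⟨(k : ℕ) - m, hkn⟩
        simp only [hb] at h'
        have hkk : Fin.natAdd m ⟨(k : ℕ) - m, hkn⟩ = k := Fin.ext (by simp; omega)
        rwa [hkk] at h'
    · simp only [Fintype.card_fun, Fintype.card_prod, Fintype.card_fin]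
      rw [pow_add]
  have hreind : entn T A μ (m + n)
      = ∑ p : (Fin m → ↥A) × (Fin n → ↥A),
          Real.negMulLog ((μ (cell T A m p.1 ∩ T^[m] ⁻¹' cell T A n p.2)).toReal) := by
    rw [entn]
    refine Fintype.sum_bijective b hbij _ _ fun c => ?_
    rw [cell_split m n c]
  rw [hreind, Fintype.sum_prod_type]
  refine le_trans (subadd (hpf m) hqf μ) (le_of_eq ?_)
  congr 1
  rw [entn]
  exact Finset.sum_congr rfl fun c _ => by
    rw [MeasureTheory.Measure.map_apply (hTm.iterate m) ((hpf n).1 c)]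

end Dyn3

section Dyn4

variable {X : Type*} [MeasurableSpace X] {T : X → X} {A : Finset (Set X)}
variable (hTm : Measurable T) (hAm : ∀ S ∈ A, MeasurableSet S)
  (hAd : ∀ S ∈ A, ∀ S' ∈ A, S ≠ S' → S ∩ S' = ∅) (hAc : ⋃₀ (A : Set (Set X)) = Set.univ)

set_option linter.unusedSectionVars false

include hTm hAm hAd hAc in
lemma entn_iter (σ : MeasureTheory.Measure X) [MeasureTheory.IsProbabilityMeasure σ] (M : ℕ) :
    ∀ t j : ℕ, entn T A (σ.map T^[j]) (t * M)
      ≤ ∑ i ∈ Finset.range t, entn T A (σ.map T^[j + i * M]) M := by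
  have hinst : ∀ k : ℕ, MeasureTheory.IsProbabilityMeasure (σ.map T^[k]) := fun k =>
    MeasureTheory.Measure.isProbabilityMeasure_map (hTm.iterate k).aemeasurable
  intro t
  induction t with
  | zero =>
      intro j
      haveI := hinst j
      simp only [Nat.zero_mul, Finset.range_zero, Finset.sum_empty]
      rw [entn_zero]
  | succ t ih =>
      intro j
      haveI := hinst j
      have hmul : (t + 1) * M = t * M + M := by ring
      rw [hmul]
      have step := entn_split hTm hAm hAd hAc (σ.map T^[j]) (t * M) M
      have hmap : (σ.map T^[j]).map T^[t * M] = σ.map T^[j + t * M] := by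
        rw [MeasureTheory.Measure.map_map (hTm.iterate (t * M)) (hTm.iterate j),
          ← Function.iterate_add, Nat.add_comm]
      rw [hmap] at step
      calc entn T A (σ.map T^[j]) (t * M + M)
          ≤ entn T A (σ.map T^[j]) (t * M) + entn T A (σ.map T^[j + t * M]) M := step
        _ ≤ (∑ i ∈ Finset.range t, entn T A (σ.map T^[j + i * M]) M)
            + entn T A (σ.map T^[j + t * M]) M := add_le_add (ih j) le_rfl
        _ = ∑ i ∈ Finset.range (t + 1), entn T A (σ.map T^[j + i * M]) M :=
            (Finset.sum_range_succ _ _).symm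

end Dyn4

section Main

variable {X : Type*} [MeasurableSpace X] {T : X → X} {A : Finset (Set X)}

set_option linter.unusedSectionVars false

lemma partEntropy_eq_entn (hAd : ∀ S ∈ A, ∀ S' ∈ A, S ≠ S' → S ∩ S' = ∅)
    (μ : MeasureTheory.Measure X) (n : ℕ) :
    WTPaper.partEntropy μ (WTPaper.refinePart T A n) = entn T A μ n := by
  rw [WTPaper.partEntropy, WTPaper.refinePart]
  have h := sum_image_of_disjoint
    (fun c : Fin n → ↥A => ⋂ k : Fin n, T^[(k : ℕ)] ⁻¹' ((c k : Set X)))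
    (fun S => Real.negMulLog ((μ S).toReal)) (by simp)
    (fun c c' hcc => cell_disj hAd hcc)
  calc ∑ S ∈ (letI := Classical.decEq (Set X);
        Finset.image (fun c : Fin n → ↥A => ⋂ k : Fin n, T^[(k : ℕ)] ⁻¹' ((c k : Set X)))
          Finset.univ), -((μ S).toReal * Real.log (μ S).toReal)
      = ∑ S ∈ (letI := Classical.decEq (Set X);
        Finset.image (fun c : Fin n → ↥A => ⋂ k : Fin n, T^[(k : ℕ)] ⁻¹' ((c k : Set X)))
          Finset.univ), Real.negMulLog ((μ S).toReal) :=
        Finset.sum_congr rfl fun S _ => by simp [Real.negMulLog_eq_neg]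
    _ = entn T A μ n := h

theorem main
    (hT : Measurable T)
    (σ : MeasureTheory.Measure X) [MeasureTheory.IsProbabilityMeasure σ]
    (hA : WTPaper.IsFinPartition A)
    (N M : ℕ) (hN : 0 < N) (hM : 0 < M) :
    (1 / (M : ℝ)) * WTPaper.partEntropy
        (((N : ℝ≥0∞))⁻¹ • ∑ k ∈ Finset.range N, MeasureTheory.Measure.map (T^[k]) σ)
        (WTPaper.refinePart T A M)
      ≥ (1 / (N : ℝ)) * WTPaper.partEntropy σ (WTPaper.refinePart T A N)
        - (2 * (M : ℝ) * Real.log (A.card : ℝ)) / (N : ℝ) := by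
  classical
  obtain ⟨hAm, hAd, hAc⟩ := hA
  haveI hinst : ∀ k : ℕ, MeasureTheory.IsProbabilityMeasure (σ.map T^[k]) := fun k =>
    MeasureTheory.Measure.isProbabilityMeasure_map (hT.iterate k).aemeasurable
  set μN : MeasureTheory.Measure X :=
    ((N : ℝ≥0∞))⁻¹ • ∑ k ∈ Finset.range N, MeasureTheory.Measure.map (T^[k]) σ with hμN
  haveI hPN : MeasureTheory.IsProbabilityMeasure μN := by
    constructor
    rw [hμN, MeasureTheory.Measure.smul_apply, MeasureTheory.Measure.finset_sum_apply]
    simp only [smul_eq_mul]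
    have : ∀ k ∈ Finset.range N, (MeasureTheory.Measure.map (T^[k]) σ) Set.univ = 1 :=
      fun k _ => (hinst k).measure_univ
    rw [Finset.sum_congr rfl this, Finset.sum_const, Finset.card_range, nsmul_eq_mul, mul_one]
    exact ENNReal.inv_mul_cancel (by exact_mod_cast hN.ne') (ENNReal.natCast_ne_top N)
  rw [ge_iff_le, partEntropy_eq_entn hAd, partEntropy_eq_entn hAd]
  set L := Real.log (A.card : ℝ) with hLdef
  set HN := entn T A σ N with hHNdef
  set E := entn T A μN M with hEdef
  set g : ℕ → ℝ := fun k => entn T A (σ.map T^[k]) M with hgdef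
  have hM' : (0 : ℝ) < (M : ℝ) := by exact_mod_cast hM
  have hN' : (0 : ℝ) < (N : ℝ) := by exact_mod_cast hN
  -- log |A| is nonnegative
  have hL0 : 0 ≤ L := by
    have hX : Nonempty X := by
      by_contra h
      rw [not_nonempty_iff] at h
      have h0 : σ Set.univ = 0 := by
        rw [Set.univ_eq_empty_iff.2 h]
        exact measure_empty
      rw [measure_univ] at h0
      exact one_ne_zero h0
    obtain ⟨x⟩ := hX
    have hx : x ∈ ⋃₀ (A : Set (Set X)) := hAc ▸ Set.mem_univ x
    obtain ⟨S, hS, _⟩ := hx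
    have hcard : 0 < A.card := Finset.card_pos.2 ⟨S, hS⟩
    exact Real.log_nonneg (by exact_mod_cast hcard)
  have hg0 : ∀ k, 0 ≤ g k := fun k => entn_nonneg (σ.map T^[k]) M
  have hE0 : 0 ≤ E := entn_nonneg μN M
  -- Step C : Jensen / concavity
  have hC : ∑ k ∈ Finset.range N, g k ≤ (N : ℝ) * E := by
    have swap : ∑ k ∈ Finset.range N, g k
        = ∑ c : Fin M → ↥A, ∑ k ∈ Finset.range N,
            Real.negMulLog (((σ.map T^[k]) (cell T A M c)).toReal) := by
      rw [hgdef]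
      simp only [entn]
      exact Finset.sum_comm
    rw [swap]
    have hpc : ∀ c : Fin M → ↥A,
        ∑ k ∈ Finset.range N, Real.negMulLog (((σ.map T^[k]) (cell T A M c)).toReal)
          ≤ (N : ℝ) * Real.negMulLog ((μN (cell T A M c)).toReal) := by
      intro c
      have hμNS : (μN (cell T A M c)).toReal
          = ((N : ℝ))⁻¹ * ∑ k ∈ Finset.range N, ((σ.map T^[k]) (cell T A M c)).toReal := by
        rw [hμN, MeasureTheory.Measure.smul_apply, smul_eq_mul,
          MeasureTheory.Measure.finset_sum_apply, ENNReal.toReal_mul,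
          ENNReal.toReal_inv, ENNReal.toReal_natCast,
          ENNReal.toReal_sum (fun k _ => MeasureTheory.measure_ne_top _ _)]
      rw [hμNS]
      exact sum_negMulLog_le_card_mul N hN
        (fun k => ((σ.map T^[k]) (cell T A M c)).toReal) (fun k => ENNReal.toReal_nonneg)
    calc ∑ c : Fin M → ↥A, ∑ k ∈ Finset.range N,
          Real.negMulLog (((σ.map T^[k]) (cell T A M c)).toReal)
        ≤ ∑ c : Fin M → ↥A, (N : ℝ) * Real.negMulLog ((μN (cell T A M c)).toReal) :=
          Finset.sum_le_sum fun c _ => hpc c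
      _ = (N : ℝ) * E := by rw [← Finset.mul_sum, hEdef, entn]
  rcases le_or_gt M N with hMN | hMN
  · -- main case M ≤ N
    -- Step A : per-offset estimate
    have hstepA : ∀ j ∈ Finset.range M,
        HN ≤ (∑ i ∈ Finset.range ((N - j) / M), g (j + i * M)) + 2 * (M : ℝ) * L := by
      intro j hj
      have hjM : j < M := Finset.mem_range.1 hj
      have hjN : j ≤ N := le_trans hjM.le hMN
      set t := (N - j) / M with htdef
      set r := (N - j) % M with hrdef
      have hdm := Nat.div_add_mod (N - j) M
      rw [← htdef, ← hrdef] at hdm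
      have hcomm : t * M = M * t := Nat.mul_comm _ _
      have hNdecomp : N = j + (t * M + r) := by omega
      have hrM : r < M := Nat.mod_lt _ hM
      haveI := hinst j
      have c1 : HN = entn T A σ (j + (t * M + r)) := by rw [hHNdef, ← hNdecomp]
      have c2 : entn T A σ (j + (t * M + r))
          ≤ entn T A σ j + entn T A (σ.map T^[j]) (t * M + r) :=
        entn_split hT hAm hAd hAc σ j _
      have c3 : entn T A (σ.map T^[j]) (t * M + r)
          ≤ entn T A (σ.map T^[j]) (t * M) + entn T A (σ.map T^[j + t * M]) r := by
        have step := entn_split hT hAm hAd hAc (σ.map T^[j]) (t * M) r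
        have hmap : (σ.map T^[j]).map T^[t * M] = σ.map T^[j + t * M] := by
          rw [MeasureTheory.Measure.map_map (hT.iterate (t * M)) (hT.iterate j),
            ← Function.iterate_add, Nat.add_comm]
        rwa [hmap] at step
      have c4 : entn T A (σ.map T^[j]) (t * M) ≤ ∑ i ∈ Finset.range t, g (j + i * M) :=
        entn_iter hT hAm hAd hAc σ M t j
      have c5 : entn T A σ j ≤ (j : ℝ) * L := entn_le hT hAm hAd hAc σ j
      have c6 : entn T A (σ.map T^[j + t * M]) r ≤ (r : ℝ) * L := by
        haveI := hinst (j + t * M)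
        exact entn_le hT hAm hAd hAc (σ.map T^[j + t * M]) r
      have hjR : (j : ℝ) ≤ (M : ℝ) := by exact_mod_cast hjM.le
      have hrR : (r : ℝ) ≤ (M : ℝ) := by exact_mod_cast hrM.le
      have hjL : (j : ℝ) * L ≤ (M : ℝ) * L := mul_le_mul_of_nonneg_right hjR hL0
      have hrL : (r : ℝ) * L ≤ (M : ℝ) * L := mul_le_mul_of_nonneg_right hrR hL0
      rw [c1]
      calc entn T A σ (j + (t * M + r))
          ≤ entn T A σ j + entn T A (σ.map T^[j]) (t * M + r) := c2
        _ ≤ entn T A σ j + (entn T A (σ.map T^[j]) (t * M)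
            + entn T A (σ.map T^[j + t * M]) r) := by linarith
        _ ≤ (M : ℝ) * L + ((∑ i ∈ Finset.range t, g (j + i * M)) + (M : ℝ) * L) := by
            linarith
        _ = (∑ i ∈ Finset.range ((N - j) / M), g (j + i * M)) + 2 * (M : ℝ) * L := by
            rw [htdef]; ring
    -- Step B : the offset sums are disjoint pieces of `range N`
    have hB : ∑ j ∈ Finset.range M, ∑ i ∈ Finset.range ((N - j) / M), g (j + i * M)
        ≤ ∑ k ∈ Finset.range N, g k := by
      have hinner : ∀ j, ∑ i ∈ Finset.range ((N - j) / M), g (j + i * M)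
          = ∑ k ∈ (Finset.range ((N - j) / M)).image (fun i => j + i * M), g k := by
        intro j
        rw [Finset.sum_image]
        intro i _ i' _ h
        have := Nat.add_left_cancel h
        exact Nat.eq_of_mul_eq_mul_right hM this
      have hdisj : (↑(Finset.range M) : Set ℕ).PairwiseDisjoint
          (fun j => (Finset.range ((N - j) / M)).image (fun i => j + i * M)) := by
        intro j hj j' hj' hne
        simp only [Finset.coe_range, Set.mem_Iio] at hj hj'
        simp only [Function.onFun]
        rw [Finset.disjoint_left]
        intro k hk hk'
        obtain ⟨i, _, rfl⟩ := Finset.mem_image.1 hk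
        obtain ⟨i', _, hii⟩ := Finset.mem_image.1 hk'
        apply hne
        have h1 : (j + i * M) % M = j := by
          rw [Nat.add_mul_mod_self_right, Nat.mod_eq_of_lt hj]
        have h2 : (j' + i' * M) % M = j' := by
          rw [Nat.add_mul_mod_self_right, Nat.mod_eq_of_lt hj']
        rw [← h1, ← hii, h2]
      have hsub : (Finset.range M).biUnion
          (fun j => (Finset.range ((N - j) / M)).image (fun i => j + i * M))
          ⊆ Finset.range N := by
        intro k hk
        obtain ⟨j, hj, hk2⟩ := Finset.mem_biUnion.1 hk
        obtain ⟨i, hi, rfl⟩ := Finset.mem_image.1 hk2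
        have hjM : j < M := Finset.mem_range.1 hj
        have hi' : i + 1 ≤ (N - j) / M := Finset.mem_range.1 hi
        have hmul : (i + 1) * M ≤ N - j := (Nat.le_div_iff_mul_le hM).1 hi'
        have hexp : (i + 1) * M = i * M + M := by ring
        rw [Finset.mem_range]
        omega
      calc ∑ j ∈ Finset.range M, ∑ i ∈ Finset.range ((N - j) / M), g (j + i * M)
          = ∑ j ∈ Finset.range M,
              ∑ k ∈ (Finset.range ((N - j) / M)).image (fun i => j + i * M), g k :=
            Finset.sum_congr rfl fun j _ => hinner j
        _ = ∑ k ∈ (Finset.range M).biUnion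
              (fun j => (Finset.range ((N - j) / M)).image (fun i => j + i * M)), g k :=
            (Finset.sum_biUnion hdisj).symm
        _ ≤ ∑ k ∈ Finset.range N, g k :=
            Finset.sum_le_sum_of_subset_of_nonneg hsub (fun k _ _ => hg0 k)
    -- combine
    have hkey : (M : ℝ) * HN ≤ (N : ℝ) * E + 2 * (M : ℝ) ^ 2 * L := by
      have hsum := Finset.sum_le_sum hstepA
      rw [Finset.sum_const, Finset.card_range, nsmul_eq_mul] at hsum
      have : ∑ j ∈ Finset.range M,
            ((∑ i ∈ Finset.range ((N - j) / M), g (j + i * M)) + 2 * (M : ℝ) * L)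
          = (∑ j ∈ Finset.range M, ∑ i ∈ Finset.range ((N - j) / M), g (j + i * M))
            + (M : ℝ) * (2 * (M : ℝ) * L) := by
        rw [Finset.sum_add_distrib, Finset.sum_const, Finset.card_range, nsmul_eq_mul]
      rw [this] at hsum
      nlinarith [hB, hC]
    have hdiff : 0 ≤ (1 / (M : ℝ)) * E + 2 * (M : ℝ) * L / (N : ℝ) - (1 / (N : ℝ)) * HN := by
      have hexpand : (1 / (M : ℝ)) * E + 2 * (M : ℝ) * L / (N : ℝ) - (1 / (N : ℝ)) * HN
          = ((N : ℝ) * E + 2 * (M : ℝ) ^ 2 * L - (M : ℝ) * HN) / ((M : ℝ) * (N : ℝ)) := by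
        field_simp
      rw [hexpand]
      exact div_nonneg (by linarith) (mul_pos hM' hN').le
    linarith
  · -- trivial case N < M
    have hHN : HN ≤ (N : ℝ) * L := entn_le hT hAm hAd hAc σ N
    have hMNr : (N : ℝ) ≤ (M : ℝ) := by exact_mod_cast hMN.le
    have h1 : (1 / (N : ℝ)) * HN ≤ L := by
      rw [div_mul_eq_mul_div, one_mul, div_le_iff₀ hN']
      calc HN ≤ (N : ℝ) * L := hHN
        _ = L * (N : ℝ) := by ring
    have h2 : 2 * L ≤ 2 * (M : ℝ) * L / (N : ℝ) := by
      rw [le_div_iff₀ hN']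
      nlinarith
    have h3 : 0 ≤ (1 / (M : ℝ)) * E := by positivity
    linarith

end Main

end WTAux

namespace WTPaper

/-- **Lemma 4.3**: for a (not necessarily invariant) Borel probability measure `σ` on a
dynamical system `(X, T)`, a finite Borel partition `A`, and
`μ_N = (1/N) ∑_{k=0}^{N-1} (T^k)_* σ`:
`(1/M) H_{μ_N}(A_M) ≥ (1/N) H_σ(A_N) − 2 M log|A| / N`. -/
theorem average_pushforward_entropy_bound
    (X : Type*) [MetricSpace X] [CompactSpace X]
    [MeasurableSpace X] [BorelSpace X]
    (T : X → X) (hT : Continuous T)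
    (σ : Measure X) [IsProbabilityMeasure σ]
    (A : Finset (Set X)) (hA : IsFinPartition A)
    (N M : ℕ) (hN : 0 < N) (hM : 0 < M) :
    (1 / (M : ℝ)) * partEntropy
        (((N : ℝ≥0∞))⁻¹ • ∑ k ∈ Finset.range N, Measure.map (T^[k]) σ)
        (refinePart T A M)
      ≥ (1 / (N : ℝ)) * partEntropy σ (refinePart T A N)
        - (2 * (M : ℝ) * Real.log (A.card : ℝ)) / (N : ℝ) := by
  exact WTAux.main hT.measurable σ hA N M hN hM

end WTPaper
end
end

section
/- Let (X,T) be a dynamical system with metric d, ε > 0, and C = {C_0, C_1, …, C_m} a partition of X such that C_1, …, C_m are compact and d(y_1, y_2) > ε whenever y_1 ∈ C_i, y_2 ∈ C_j with 1 ≤ i < j ≤ m. Then for every N ∈ ℕ and every subset V ⊆ X with diam(V, d_N) < ε, the number of elements D of the refined partition C_N with D ∩ V ≠ ∅ is at most 2^N. -/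
open Set MeasureTheory Filter Topology
open scoped ENNReal NNReal

noncomputable section

namespace WTPaper

/-- **Lemma 5.3 (1)**: let `C = {C_0, C_1, …, C_m}` be a partition of `X` whose members
`C_1, …, C_m` are compact and `ε`-separated from each other. Then any set `V` of
`d_N`-diameter `< ε` meets at most `2^N` elements of the refined partition `C_N`. -/
theorem refined_partition_meets_few_cells
    (X : Type*) [MetricSpace X] [CompactSpace X]
    (T : X → X) (hT : Continuous T)
    (ε : ℝ) (hε : 0 < ε)
    (m : ℕ) (C : Fin (m + 1) → Set X)
    (hdisj : ∀ i j : Fin (m + 1), i ≠ j → C i ∩ C j = ∅)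
    (hcover : ⋃ i, C i = Set.univ)
    (hcpt : ∀ i : Fin (m + 1), i ≠ 0 → IsCompact (C i))
    (hsep : ∀ i j : Fin (m + 1), i ≠ 0 → j ≠ 0 → i ≠ j →
      ∀ y₁ ∈ C i, ∀ y₂ ∈ C j, ε < dist y₁ y₂)
    (N : ℕ) (V : Set X) (hV : dynDiam T N V < ENNReal.ofReal ε) :
    (@Finset.filter _ (fun D => (D ∩ V).Nonempty) (Classical.decPred _)
        (refinePart T (@Finset.image _ _ (Classical.decEq _) C Finset.univ) N)).card ≤ 2 ^ N := by
  classical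
  set P : Finset (Set X) := @Finset.image _ _ (Classical.decEq _) C Finset.univ with hP
  -- every cell of the refined partition is an intersection of preimages of the `C i`
  have hrep : ∀ D ∈ refinePart T P N, ∃ i : Fin N → Fin (m + 1),
      D = ⋂ k : Fin N, T^[(k : ℕ)] ⁻¹' C (i k) := by
    intro D hD
    simp only [refinePart, Finset.mem_image, Finset.mem_univ, true_and] at hD
    obtain ⟨c, hc⟩ := hD
    have hex : ∀ k : Fin N, ∃ i, C i = (c k : Set X) := by
      intro k
      have h2 : (c k : Set X) ∈ @Finset.image _ _ (Classical.decEq _) C Finset.univ :=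
        (c k).2
      obtain ⟨i, -, hi⟩ := Finset.mem_image.mp h2
      exact ⟨i, hi⟩
    choose i hi using hex
    refine ⟨i, ?_⟩
    rw [← hc]
    exact iInter_congr fun k => by rw [hi]
  -- points of V are `ε`-close along the first `N` iterates
  have hdist : ∀ x ∈ V, ∀ y ∈ V, ∀ k : Fin N,
      dist (T^[(k : ℕ)] x) (T^[(k : ℕ)] y) < ε := by
    intro x hx y hy k
    have h1 : edist (T^[(k : ℕ)] x) (T^[(k : ℕ)] y) ≤ dynEDist T N x y := by
      rw [dynEDist]
      exact Finset.le_sup (f := fun n => edist (T^[n] x) (T^[n] y)) (Finset.mem_range.mpr k.isLt)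
    have h2 : dynEDist T N x y ≤ dynDiam T N V := by
      rw [dynDiam]
      refine le_trans (le_iSup₂ (f := fun y (_ : y ∈ V) => dynEDist T N x y) y hy) ?_
      exact le_iSup₂ (f := fun x (_ : x ∈ V) => ⨆ y ∈ V, dynEDist T N x y) x hx
    have := lt_of_le_of_lt (h1.trans h2) hV
    exact edist_lt_ofReal.mp this
  -- the injection into `Fin N → Bool`
  set f : Set X → Fin N → Bool :=
    fun D k => decide (∀ x ∈ D ∩ V, T^[(k : ℕ)] x ∈ C 0) with hf
  have hinj : Set.InjOn f ↑(@Finset.filter _ (fun D => (D ∩ V).Nonempty)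
      (Classical.decPred _) (refinePart T P N)) := by
    intro D hD D' hD' hff
    rw [Finset.mem_coe, Finset.mem_filter] at hD hD'
    obtain ⟨hDmem, x, hxD, hxV⟩ := hD
    obtain ⟨hD'mem, x', hx'D, hx'V⟩ := hD'
    obtain ⟨i, hDe⟩ := hrep D hDmem
    obtain ⟨i', hD'e⟩ := hrep D' hD'mem
    have hmemD : ∀ z ∈ D, ∀ k : Fin N, T^[(k : ℕ)] z ∈ C (i k) := by
      intro z hz k
      rw [hDe] at hz
      exact Set.mem_iInter.mp hz k
    have hmemD' : ∀ z ∈ D', ∀ k : Fin N, T^[(k : ℕ)] z ∈ C (i' k) := by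
      intro z hz k
      rw [hD'e] at hz
      exact Set.mem_iInter.mp hz k
    have hik : ∀ k : Fin N, i k = i' k := by
      intro k
      have hbe : (∀ z ∈ D ∩ V, T^[(k : ℕ)] z ∈ C 0) ↔
          (∀ z ∈ D' ∩ V, T^[(k : ℕ)] z ∈ C 0) := by
        have := congrFun hff k
        rw [hf] at this
        exact decide_eq_decide.mp this
      by_cases hb : ∀ z ∈ D ∩ V, T^[(k : ℕ)] z ∈ C 0
      · -- both indices are 0
        have h0 : i k = 0 := by
          by_contra h
          have := hdisj (i k) 0 h
          exact absurd (Set.mem_inter (hmemD x hxD k) (hb x ⟨hxD, hxV⟩)) (by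
            rw [this]; exact Set.notMem_empty _)
        have h0' : i' k = 0 := by
          by_contra h
          have h1 := hbe.mp hb
          have := hdisj (i' k) 0 h
          exact absurd (Set.mem_inter (hmemD' x' hx'D k) (h1 x' ⟨hx'D, hx'V⟩)) (by
            rw [this]; exact Set.notMem_empty _)
        rw [h0, h0']
      · -- both indices are nonzero; use separation
        obtain ⟨z, hz, hz0⟩ := not_forall₂.mp hb
        obtain ⟨z', hz', hz'0⟩ := not_forall₂.mp (fun h => hb (hbe.mpr h))
        have hik0 : i k ≠ 0 := fun h => hz0 (h ▸ hmemD z hz.1 k)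
        have hi'k0 : i' k ≠ 0 := fun h => hz'0 (h ▸ hmemD' z' hz'.1 k)
        by_contra hne
        have hsep' := hsep (i k) (i' k) hik0 hi'k0 hne
          (T^[(k : ℕ)] z) (hmemD z hz.1 k) (T^[(k : ℕ)] z') (hmemD' z' hz'.1 k)
        exact absurd (hdist z hz.2 z' hz'.2 k) (not_lt.mpr hsep'.le)
    rw [hDe, hD'e]
    exact iInter_congr fun k => by rw [hik]
  calc (@Finset.filter _ (fun D => (D ∩ V).Nonempty) (Classical.decPred _)
        (refinePart T P N)).card
      ≤ (Finset.univ : Finset (Fin N → Bool)).card :=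
        Finset.card_le_card_of_injOn f (fun _ _ => Finset.mem_univ _) hinj
    _ = 2 ^ N := by simp


end WTPaper
end
end

section
/- Let π : (X,T) → (Y,S) be a factor map between dynamical systems, d a metric on X, and ε > 0. Let C' = {C'_{J'}}_{J'∈Λ'} be a finite partition of Y, and let C = { C_{J',j} : J' ∈ Λ', 0 ≤ j ≤ m } be a finite partition of X such that for each J' ∈ Λ' one has ⋃_{j=0}^m C_{J',j} = π^{−1}(C'_{J'}), the sets C_{J',j} with j ≥ 1 are compact, and d(y_1,y_2) > ε for any two points y_1, y_2 lying in two distinct compact members C_{J',j} (j ≥ 1) of C. For N ∈ ℕ and C ∈ C'_N let C_N(C) = { D ∈ C_N : π(D) ⊆ C }. Then for every V ⊆ X with diam(V, d_N) < ε and every C ∈ C'_N, the number of D ∈ C_N(C) with D ∩ V ≠ ∅ is at most 2^N. -/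
open Set MeasureTheory Filter Topology
open scoped ENNReal NNReal

noncomputable section

namespace WTPaper

/-- **Lemma 5.3 (2)**: with `C'` a finite partition of `Y`, and `C = {C_{J',j}}` a partition
of `X` refining `π⁻¹(C')` whose members with `j ≥ 1` are compact and `ε`-separated,
any set `V ⊆ X` of `d_N`-diameter `< ε` meets at most `2^N` elements of
`C_N(C) = { D ∈ C_N : π(D) ⊆ C }`, for each cell `C` of `C'_N`. -/
theorem refined_partition_relative_meets_few_cells
    (X Y : Type*) [MetricSpace X] [MetricSpace Y] [CompactSpace X] [CompactSpace Y]
    (T : X → X) (S : Y → Y) (hT : Continuous T) (hS : Continuous S)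
    (π : X → Y) (hπcont : Continuous π) (hπsurj : Function.Surjective π)
    (hπfact : π ∘ T = S ∘ π)
    (ε : ℝ) (hε : 0 < ε)
    (ι : Type*) [Fintype ι]
    (C' : ι → Set Y)
    (hC'disj : ∀ s t : ι, s ≠ t → C' s ∩ C' t = ∅)
    (hC'cover : ⋃ s, C' s = Set.univ)
    (m : ℕ) (C : ι × Fin (m + 1) → Set X)
    (hfiber : ∀ s : ι, ⋃ j : Fin (m + 1), C (s, j) = π ⁻¹' (C' s))
    (hdisj : ∀ p q : ι × Fin (m + 1), p ≠ q → C p ∩ C q = ∅)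
    (hcover : ⋃ p, C p = Set.univ)
    (hcpt : ∀ p : ι × Fin (m + 1), p.2 ≠ 0 → IsCompact (C p))
    (hsep : ∀ p q : ι × Fin (m + 1), p.2 ≠ 0 → q.2 ≠ 0 → p ≠ q →
      ∀ y₁ ∈ C p, ∀ y₂ ∈ C q, ε < dist y₁ y₂)
    (N : ℕ) (V : Set X) (hV : dynDiam T N V < ENNReal.ofReal ε)
    (c' : Fin N → ι) :
    (@Finset.filter _
        (fun D => π '' D ⊆ (⋂ k : Fin N, S^[(k : ℕ)] ⁻¹' C' (c' k)) ∧ (D ∩ V).Nonempty)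
        (Classical.decPred _)
        (refinePart T (@Finset.image _ _ (Classical.decEq _) C Finset.univ) N)).card
      ≤ 2 ^ N := by
  classical
  have hsemi : ∀ (k : ℕ) (x : X), π (T^[k] x) = S^[k] (π x) := by
    intro k x
    have hsc : Function.Semiconj π T S := fun z => congrFun hπfact z
    exact (hsc.iterate_right k) x
  have hsub : ∀ p : ι × Fin (m + 1), C p ⊆ π ⁻¹' (C' p.1) := by
    intro p x hx
    have h := hfiber p.1
    rw [← h]
    exact Set.mem_iUnion.2 ⟨p.2, hx⟩
  -- every element of the refined partition has a code
  have key : ∀ D ∈ refinePart T (Finset.image C Finset.univ) N,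
      ∃ p : Fin N → ι × Fin (m + 1), D = ⋂ k : Fin N, T^[(k : ℕ)] ⁻¹' C (p k) := by
    intro D hD
    simp only [refinePart, Finset.mem_image, Finset.mem_univ, true_and] at hD
    obtain ⟨c, hc⟩ := hD
    have hch : ∀ k : Fin N, ∃ p : ι × Fin (m + 1), C p = (c k : Set X) := by
      intro k
      have h2 := (c k).2
      simp only [Finset.mem_image, Finset.mem_univ, true_and] at h2
      exact h2
    choose p hp using hch
    refine ⟨p, ?_⟩
    rw [← hc]
    exact iInter_congr fun k => by rw [hp k]
  set f : Set X → (Fin N → Bool) := fun D k =>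
    if h : ∃ p : Fin N → ι × Fin (m + 1), D = ⋂ k' : Fin N, T^[(k' : ℕ)] ⁻¹' C (p k')
    then decide ((h.choose k).2 = 0) else true with hfdef
  have hcard : (Finset.univ : Finset (Fin N → Bool)).card = 2 ^ N := by
    simp [Fintype.card_fun]
  rw [← hcard]
  apply Finset.card_le_card_of_injOn f (fun _ _ => Finset.mem_univ _)
  intro D₁ hD₁ D₂ hD₂ heq
  simp only [Finset.coe_filter, Set.mem_setOf_eq] at hD₁ hD₂
  obtain ⟨hD₁mem, hπD₁, x₁, hx₁D, hx₁V⟩ := hD₁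
  obtain ⟨hD₂mem, hπD₂, x₂, hx₂D, hx₂V⟩ := hD₂
  have h₁ := key D₁ hD₁mem
  have h₂ := key D₂ hD₂mem
  have hp₁ := h₁.choose_spec
  have hp₂ := h₂.choose_spec
  set p₁ := h₁.choose with hp₁def
  set p₂ := h₂.choose with hp₂def
  have hf₁ : ∀ k, f D₁ k = decide ((p₁ k).2 = 0) := fun k => by
    simp only [hfdef]; rw [dif_pos h₁]
  have hf₂ : ∀ k, f D₂ k = decide ((p₂ k).2 = 0) := fun k => by
    simp only [hfdef]; rw [dif_pos h₂]
  -- membership of iterates in cells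
  have hx₁k : ∀ k : Fin N, T^[(k : ℕ)] x₁ ∈ C (p₁ k) := by
    rw [hp₁] at hx₁D; exact fun k => Set.mem_iInter.1 hx₁D k
  have hx₂k : ∀ k : Fin N, T^[(k : ℕ)] x₂ ∈ C (p₂ k) := by
    rw [hp₂] at hx₂D; exact fun k => Set.mem_iInter.1 hx₂D k
  -- first components are forced to be c' k
  have hfst : ∀ (x : X) (p : Fin N → ι × Fin (m + 1)),
      (∀ k : Fin N, T^[(k : ℕ)] x ∈ C (p k)) →
      (π '' (⋂ k : Fin N, T^[(k : ℕ)] ⁻¹' C (p k)) ⊆ ⋂ k : Fin N, S^[(k : ℕ)] ⁻¹' C' (c' k)) →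
      ∀ k : Fin N, (p k).1 = c' k := by
    intro x p hxk hπD k
    have hx : x ∈ ⋂ k : Fin N, T^[(k : ℕ)] ⁻¹' C (p k) := Set.mem_iInter.2 hxk
    have h1 : π (T^[(k : ℕ)] x) ∈ C' (p k).1 := hsub (p k) (hxk k)
    have h2 : S^[(k : ℕ)] (π x) ∈ C' (c' k) :=
      Set.mem_iInter.1 (hπD ⟨x, hx, rfl⟩) k
    rw [hsemi] at h1
    by_contra hne
    have := hC'disj _ _ hne
    have : S^[(k : ℕ)] (π x) ∈ C' (p k).1 ∩ C' (c' k) := ⟨h1, h2⟩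
    rw [hC'disj _ _ hne] at this
    exact this
  have hfst₁ : ∀ k : Fin N, (p₁ k).1 = c' k := by
    refine hfst x₁ p₁ hx₁k ?_ ; rw [← hp₁]; exact hπD₁
  have hfst₂ : ∀ k : Fin N, (p₂ k).1 = c' k := by
    refine hfst x₂ p₂ hx₂k ?_ ; rw [← hp₂]; exact hπD₂
  -- distance bound from diameter
  have hdist : ∀ k : Fin N, dist (T^[(k : ℕ)] x₁) (T^[(k : ℕ)] x₂) < ε := by
    intro k
    have he1 : edist (T^[(k : ℕ)] x₁) (T^[(k : ℕ)] x₂) ≤ dynEDist T N x₁ x₂ := by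
      unfold dynEDist
      exact Finset.le_sup (f := fun n => edist (T^[n] x₁) (T^[n] x₂)) (Finset.mem_range.2 k.isLt)
    have he2 : dynEDist T N x₁ x₂ ≤ dynDiam T N V := by
      unfold dynDiam
      have hinner : dynEDist T N x₁ x₂ ≤ ⨆ y ∈ V, dynEDist T N x₁ y :=
        le_iSup₂ (f := fun y (_ : y ∈ V) => dynEDist T N x₁ y) x₂ hx₂V
      refine le_trans hinner ?_
      exact le_iSup₂ (f := fun x (_ : x ∈ V) => ⨆ y ∈ V, dynEDist T N x y) x₁ hx₁V
    have := lt_of_le_of_lt (le_trans he1 he2) hV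
    exact edist_lt_ofReal.mp this
  -- codes agree
  have hpeq : p₁ = p₂ := by
    funext k
    have hb : ((p₁ k).2 = 0) ↔ ((p₂ k).2 = 0) := by
      have : decide ((p₁ k).2 = 0) = decide ((p₂ k).2 = 0) := by
        rw [← hf₁ k, ← hf₂ k, heq]
      exact decide_eq_decide.mp this
    by_cases h0 : (p₁ k).2 = 0
    · have h0' : (p₂ k).2 = 0 := hb.mp h0
      have : (p₁ k) = (c' k, (0 : Fin (m + 1))) := Prod.ext (hfst₁ k) h0
      have h2 : (p₂ k) = (c' k, (0 : Fin (m + 1))) := Prod.ext (hfst₂ k) h0'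
      rw [this, h2]
    · have h0' : (p₂ k).2 ≠ 0 := fun h => h0 (hb.mpr h)
      by_contra hne
      have := hsep (p₁ k) (p₂ k) h0 h0' hne _ (hx₁k k) _ (hx₂k k)
      exact absurd (hdist k) (not_lt.2 (le_of_lt this))
  rw [hp₁, hp₂, hpeq]


end WTPaper
end
end
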